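/- arXiv:1611.04819 — 7 statements merged into one kernel-verified Lean document; each statement's English description precedes it below -/
import Mathlib

section
/- Let δ ≥ 1 be real, k ∈ ℕ and s < 0. Then for every x ≥ 0, (k! Γ(δ)/Γ(δ+k)) e^{s x²} L_k^{(δ−1)}(−s x²) = ∫₀^∞ j_{δ−1}(2x√r) · [1/Γ(δ+k)] e^{r/s} (−r/s)^{δ+k−1} (−1/s) dr. (This verifies the intertwining identity for the quantum Bessel semigroup of dimension δ at the critical time t = −s, when the process reaches the vertical axis with a Gamma(δ+k, −s) distributed second coordinate.) -/
open Real MeasureTheory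

/-- Generalized Laguerre polynomial `L_k^{(α)}(x)`. -/
noncomputable def lagPoly (α : ℝ) (k : ℕ) (x : ℝ) : ℝ :=
  ∑ i ∈ Finset.range (k + 1),
    (-1 : ℝ) ^ i * Real.Gamma (k + α + 1) * x ^ i /
      (Real.Gamma (i + α + 1) * (Nat.factorial (k - i)) * (Nat.factorial i))

/-- Normalized spherical Bessel function `j_ν(z)`. -/
noncomputable def sphBessel (ν : ℝ) (z : ℝ) : ℝ :=
  Real.Gamma (ν + 1) *
    ∑' m : ℕ, (-1 : ℝ) ^ m * (z / 2) ^ (2 * m) /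
      (Nat.factorial m * Real.Gamma (ν + m + 1))

lemma asc_prod (n : ℕ) : ∀ k, n.ascFactorial k = ∏ j ∈ Finset.range k, (n + j)
  | 0 => by simp
  | k + 1 => by rw [Nat.ascFactorial_succ, Finset.prod_range_succ, asc_prod n k, mul_comm]

lemma natID (n k m : ℕ) :
    ∑ i ∈ Finset.range (m+1), m.choose i * k.choose i * i.factorial * (n+1+i).ascFactorial (m-i)
      = (n+1+k).ascFactorial m := by
  have h1 : ∀ i ∈ Finset.range (m+1),
      m.choose i * k.choose i * i.factorial * (n+1+i).ascFactorial (m-i)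
        = m.factorial * (k.choose i * (n+m).choose (m-i)) := by
    intro i hi
    have him : i ≤ m := Finset.mem_range_succ_iff.mp hi
    have : (n+1+i) = (n+i) + 1 := by ring
    rw [this, Nat.ascFactorial_eq_factorial_mul_choose]
    have : n + i + (m - i) = n + m := by omega
    rw [this]
    have := Nat.choose_mul_factorial_mul_factorial him
    calc m.choose i * k.choose i * i.factorial * ((m-i).factorial * (n+m).choose (m-i))
        = (m.choose i * i.factorial * (m-i).factorial) * (k.choose i * (n+m).choose (m-i)) := by ring
      _ = m.factorial * (k.choose i * (n+m).choose (m-i)) := by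
          rw [this]
  rw [Finset.sum_congr rfl h1, ← Finset.mul_sum]
  have h2 : (n+1+k) = (n+k)+1 := by ring
  rw [h2, Nat.ascFactorial_eq_factorial_mul_choose]
  congr 1
  have h3 : n + k + m = k + (n + m) := by ring
  rw [h3, Nat.add_choose_eq, Finset.Nat.sum_antidiagonal_eq_sum_range_succ_mk]

lemma polyID (k m : ℕ) (δ : ℝ) :
    ∑ i ∈ Finset.range (m+1),
        (m.choose i * k.choose i * i.factorial : ℝ) * ∏ j ∈ Finset.Ico i m, (δ + j)
      = ∏ j ∈ Finset.range m, (δ + k + j) := by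
  set P : Polynomial ℝ := ∑ i ∈ Finset.range (m+1),
      Polynomial.C (m.choose i * k.choose i * i.factorial : ℝ) *
        ∏ j ∈ Finset.Ico i m, (Polynomial.X + Polynomial.C (j : ℝ)) with hP
  set Q : Polynomial ℝ := ∏ j ∈ Finset.range m, (Polynomial.X + Polynomial.C ((k + j : ℕ) : ℝ)) with hQ
  have evalP : ∀ y : ℝ, P.eval y = ∑ i ∈ Finset.range (m+1),
      (m.choose i * k.choose i * i.factorial : ℝ) * ∏ j ∈ Finset.Ico i m, (y + j) := by
    intro y; simp [hP, Polynomial.eval_finset_sum, Polynomial.eval_prod]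
  have evalQ : ∀ y : ℝ, Q.eval y = ∏ j ∈ Finset.range m, (y + (k + j : ℕ)) := by
    intro y; simp [hQ, Polynomial.eval_prod]
  have hPQ : P = Q := by
    apply Polynomial.eq_of_infinite_eval_eq
    apply Set.Infinite.mono (s := Set.range (fun n : ℕ => (n + 1 : ℝ)))
    · rintro _ ⟨n, rfl⟩
      simp only [Set.mem_setOf_eq, evalP, evalQ]
      have key := natID n k m
      have cast_key := congrArg (Nat.cast : ℕ → ℝ) key
      push_cast [asc_prod] at cast_key
      rw [show (∏ j ∈ Finset.range m, ((n:ℝ) + 1 + ((k + j : ℕ):ℝ)))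
            = ∏ j ∈ Finset.range m, ((n:ℝ) + 1 + k + j) from
          Finset.prod_congr rfl (by intro j _; push_cast; ring), ← cast_key]
      apply Finset.sum_congr rfl
      intro i hi
      have him : i ≤ m := Finset.mem_range_succ_iff.mp hi
      congr 1
      rw [Finset.prod_Ico_eq_prod_range]
      apply Finset.prod_congr rfl
      intro j hj
      push_cast
      ring
    · apply Set.infinite_range_of_injective
      intro a b hab
      simpa using hab
  have := congrArg (Polynomial.eval δ) hPQ
  rw [evalP, evalQ] at this
  rw [this]
  apply Finset.prod_congr rfl
  intro j hj; push_cast; ring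

lemma Gamma_prod (δ : ℝ) (hδ : 0 < δ) : ∀ n : ℕ,
    Real.Gamma (δ + n) = Real.Gamma δ * ∏ j ∈ Finset.range n, (δ + j)
  | 0 => by simp
  | n + 1 => by
    have h1 : δ + (n+1 : ℕ) = (δ + n) + 1 := by push_cast; ring
    have h2 : δ + (n : ℕ) ≠ 0 := by positivity
    rw [h1, Real.Gamma_add_one h2, Gamma_prod δ hδ n, Finset.prod_range_succ]
    ring

lemma gammaVdm (δ : ℝ) (hδ : 0 < δ) (k m : ℕ) :
    ∑ i ∈ Finset.range (k+1), (if i ≤ m then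
        (k.factorial : ℝ) * Real.Gamma (δ + k) /
          (Real.Gamma (δ + i) * (k-i).factorial * i.factorial * (m-i).factorial)
      else 0)
    = Real.Gamma (δ + k + m) / (m.factorial * Real.Gamma (δ + m)) := by
  have hΓ : ∀ y : ℝ, 0 < y → 0 < Real.Gamma y := fun y hy => Real.Gamma_pos_of_pos hy
  have key : ∀ i, i ≤ k → i ≤ m →
      (k.factorial : ℝ) * Real.Gamma (δ + k) /
          (Real.Gamma (δ + i) * (k-i).factorial * i.factorial * (m-i).factorial)
        = Real.Gamma (δ + k) / (m.factorial * Real.Gamma (δ + m)) *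
            ((m.choose i * k.choose i * i.factorial : ℝ) * ∏ j ∈ Finset.Ico i m, (δ + j)) := by
    intro i hik him
    have hΓm : Real.Gamma (δ + m) = Real.Gamma (δ + i) * ∏ j ∈ Finset.Ico i m, (δ + j) := by
      have h0 : 0 < δ + i := by positivity
      have := Gamma_prod (δ + i) h0 (m - i)
      have hm : δ + (i:ℝ) + ((m - i : ℕ) : ℝ) = δ + m := by
        have : ((m - i : ℕ) : ℝ) = (m : ℝ) - i := by
          push_cast [Nat.cast_sub him]; ring
        rw [this]; ring
      rw [hm] at this
      rw [this, Finset.prod_Ico_eq_prod_range]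
      congr 1
      apply Finset.prod_congr rfl
      intro j _; push_cast; ring
    have hprodpos : 0 < ∏ j ∈ Finset.Ico i m, (δ + j) := by
      apply Finset.prod_pos; intro j _; positivity
    have hc1 : (m.choose i : ℝ) = m.factorial / (i.factorial * (m - i).factorial) :=
      Nat.cast_choose ℝ him
    have hc2 : (k.choose i : ℝ) = k.factorial / (i.factorial * (k - i).factorial) :=
      Nat.cast_choose ℝ hik
    rw [hΓm, hc1, hc2]
    have f1 : (0:ℝ) < i.factorial := by positivity
    have f2 : (0:ℝ) < (m-i).factorial := by positivity
    have f3 : (0:ℝ) < (k-i).factorial := by positivity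
    have f4 : (0:ℝ) < m.factorial := by positivity
    have g1 : (0:ℝ) < Real.Gamma (δ + i) := hΓ _ (by positivity)
    field_simp
  have step1 : ∑ i ∈ Finset.range (k+1), (if i ≤ m then
        (k.factorial : ℝ) * Real.Gamma (δ + k) /
          (Real.Gamma (δ + i) * (k-i).factorial * i.factorial * (m-i).factorial)
      else 0)
      = ∑ i ∈ Finset.range (k+1) ∩ Finset.range (m+1),
          Real.Gamma (δ + k) / (m.factorial * Real.Gamma (δ + m)) *
            ((m.choose i * k.choose i * i.factorial : ℝ) * ∏ j ∈ Finset.Ico i m, (δ + j)) := by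
    rw [← Finset.sum_ite_mem]
    apply Finset.sum_congr rfl
    intro i hi
    have hik : i ≤ k := Finset.mem_range_succ_iff.mp hi
    by_cases him : i ≤ m
    · rw [if_pos (Finset.mem_range_succ_iff.mpr him), if_pos him, key i hik him]
    · rw [if_neg (fun h => him (Finset.mem_range_succ_iff.mp h)), if_neg him]
  rw [step1]
  have step2 : ∑ i ∈ Finset.range (k+1) ∩ Finset.range (m+1),
          Real.Gamma (δ + k) / (m.factorial * Real.Gamma (δ + m)) *
            ((m.choose i * k.choose i * i.factorial : ℝ) * ∏ j ∈ Finset.Ico i m, (δ + j))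
      = ∑ i ∈ Finset.range (m+1),
          Real.Gamma (δ + k) / (m.factorial * Real.Gamma (δ + m)) *
            ((m.choose i * k.choose i * i.factorial : ℝ) * ∏ j ∈ Finset.Ico i m, (δ + j)) := by
    apply Finset.sum_subset
    · exact Finset.inter_subset_right
    · intro i hi hni
      have : ¬ i ≤ k := by
        intro h
        exact hni (Finset.mem_inter.mpr ⟨Finset.mem_range_succ_iff.mpr h, hi⟩)
      rw [Nat.choose_eq_zero_of_lt (show k < i by omega)]
      simp
  rw [step2, ← Finset.mul_sum, polyID, Gamma_prod (δ + k) (by positivity) m]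
  ring

lemma exp_tsum (y : ℝ) : Real.exp y = ∑' n : ℕ, y ^ n / n.factorial := by
  rw [Real.exp_eq_exp_ℝ, NormedSpace.exp_eq_tsum_div]

lemma sumASum (δ : ℝ) (hδ : 1 ≤ δ) (k : ℕ) (u : ℝ) (hu : 0 ≤ u) :
    Summable (fun m : ℕ => u ^ m * Real.Gamma (δ + k + m) / (m.factorial * Real.Gamma (δ + m))) := by
  set f : ℕ → ℝ := fun m => u ^ m * Real.Gamma (δ + k + m) / (m.factorial * Real.Gamma (δ + m)) with hf
  have hδ0 : (0:ℝ) < δ := lt_of_lt_of_le one_pos hδ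
  have hfpos : ∀ m, 0 ≤ f m := by
    intro m
    have := Real.Gamma_pos_of_pos (show (0:ℝ) < δ + k + m by positivity)
    have := Real.Gamma_pos_of_pos (show (0:ℝ) < δ + m by positivity)
    positivity
  have hrec : ∀ m : ℕ, f (m + 1) = f m * (u * (δ + k + m) / ((m + 1) * (δ + m))) := by
    intro m
    have h1 : δ + (k:ℝ) + ((m+1 : ℕ):ℝ) = (δ + k + m) + 1 := by push_cast; ring
    have h2 : δ + ((m+1 : ℕ):ℝ) = (δ + m) + 1 := by push_cast; ring
    have g1 : Real.Gamma (δ + k + ((m+1:ℕ):ℝ)) = (δ + k + m) * Real.Gamma (δ + k + m) := by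
      rw [h1, Real.Gamma_add_one (by positivity)]
    have g2 : Real.Gamma (δ + ((m+1:ℕ):ℝ)) = (δ + m) * Real.Gamma (δ + m) := by
      rw [h2, Real.Gamma_add_one (by positivity)]
    have hfac : ((m+1).factorial : ℝ) = (m+1) * m.factorial := by
      rw [Nat.factorial_succ]; push_cast; ring
    have hΓm : Real.Gamma (δ + m) ≠ 0 := ne_of_gt (Real.Gamma_pos_of_pos (by positivity))
    have hfm : (m.factorial : ℝ) ≠ 0 := by positivity
    simp only [hf]
    rw [g1, g2, hfac, pow_succ]
    have hm1 : ((m:ℝ) + 1) ≠ 0 := by positivity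
    have hδm : (δ + (m:ℝ)) ≠ 0 := by positivity
    field_simp
  obtain ⟨N, hN⟩ := exists_nat_ge (2 * u * (k + 1))
  apply summable_of_ratio_norm_eventually_le (r := 1/2) (by norm_num)
  filter_upwards [Filter.eventually_ge_atTop N] with m hm
  have hmN : (2 : ℝ) * u * (k+1) ≤ m := le_trans hN (by exact_mod_cast hm)
  have hratio : u * (δ + k + m) / ((m + 1) * (δ + m)) ≤ 1/2 := by
    rw [div_le_iff₀ (by positivity)]
    have h1 : δ + (k:ℝ) + m ≤ (k + 1) * (δ + m) := by
      nlinarith [Nat.cast_nonneg (α := ℝ) k, Nat.cast_nonneg (α := ℝ) m]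
    have h2 : u * (δ + (k:ℝ) + m) ≤ u * ((k+1) * (δ + m)) :=
      mul_le_mul_of_nonneg_left h1 hu
    have h3 : u * ((k:ℝ)+1) * (δ + m) ≤ ((m:ℝ)/2) * (δ + m) := by
      apply mul_le_mul_of_nonneg_right _ (by positivity)
      linarith
    nlinarith [Nat.cast_nonneg (α := ℝ) m, hδ0]
  rw [Real.norm_eq_abs, Real.norm_eq_abs, abs_of_nonneg (hfpos _), abs_of_nonneg (hfpos _), hrec]
  calc f m * (u * (δ + k + m) / ((m + 1) * (δ + m))) ≤ f m * (1/2) :=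
        mul_le_mul_of_nonneg_left hratio (hfpos m)
    _ = 1/2 * f m := by ring

lemma sph_expand (δ : ℝ) (hδ : 1 ≤ δ) (k : ℕ) (u t : ℝ) (hu : 0 ≤ u) (ht : 0 < t) :
    sphBessel (δ - 1) (2 * Real.sqrt (u * t)) *
        (1 / Real.Gamma (δ + k) * Real.exp (-t) * t ^ (δ + (k:ℝ) - 1))
      = ∑' m : ℕ, Real.Gamma δ / Real.Gamma (δ + k) *
          ((-1:ℝ)^m * u^m / (m.factorial * Real.Gamma (δ + m))) *
          (Real.exp (-t) * t ^ (δ + (k:ℝ) + m - 1)) := by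
  unfold sphBessel
  have h1 : δ - 1 + 1 = δ := by ring
  rw [h1]
  have hterm : ∀ m : ℕ, (-1:ℝ)^m * (2 * Real.sqrt (u*t) / 2) ^ (2*m) /
        (m.factorial * Real.Gamma (δ - 1 + m + 1))
      = (-1:ℝ)^m * u^m * t^(m:ℕ) / (m.factorial * Real.Gamma (δ + m)) := by
    intro m
    have h2 : (2 * Real.sqrt (u*t) / 2) = Real.sqrt (u*t) := by ring
    have h3 : δ - 1 + m + 1 = δ + m := by ring
    rw [h2, h3, pow_mul, Real.sq_sqrt (by positivity), mul_pow]
    ring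
  rw [tsum_congr hterm, ← tsum_mul_left, ← tsum_mul_right]
  apply tsum_congr
  intro m
  have hpow : t ^ (δ + (k:ℝ) + m - 1) = t ^ (δ + (k:ℝ) - 1) * t ^ (m:ℕ) := by
    rw [← Real.rpow_natCast t m, ← Real.rpow_add ht]
    congr 1; ring
  rw [hpow]
  ring


lemma rhs_eq (δ : ℝ) (hδ : 1 ≤ δ) (k : ℕ) (u : ℝ) (hu : 0 ≤ u) :
    (∫ t in Set.Ioi (0:ℝ), sphBessel (δ - 1) (2 * Real.sqrt (u * t)) *
        (1 / Real.Gamma (δ + k) * Real.exp (-t) * t ^ (δ + (k:ℝ) - 1)))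
      = ∑' m : ℕ, Real.Gamma δ / Real.Gamma (δ + k) *
          ((-1:ℝ)^m * u^m * Real.Gamma (δ + k + m) / (m.factorial * Real.Gamma (δ + m))) := by
  have hδ0 : (0:ℝ) < δ := lt_of_lt_of_le one_pos hδ
  have hΓδ : (0:ℝ) < Real.Gamma δ := Real.Gamma_pos_of_pos hδ0
  have hΓδk : (0:ℝ) < Real.Gamma (δ + k) := Real.Gamma_pos_of_pos (by positivity)
  set g : ℕ → ℝ → ℝ := fun m t => Real.Gamma δ / Real.Gamma (δ + k) *
      ((-1:ℝ)^m * u^m / (m.factorial * Real.Gamma (δ + m))) *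
      (Real.exp (-t) * t ^ (δ + (k:ℝ) + m - 1)) with hg
  have hexp : ∀ m : ℕ, (0:ℝ) < δ + (k:ℝ) + m := by intro m; positivity
  have hΓδm : ∀ m : ℕ, (0:ℝ) < Real.Gamma (δ + m) :=
    fun m => Real.Gamma_pos_of_pos (by positivity)
  have hfac : ∀ m : ℕ, (0:ℝ) < m.factorial := fun m => by positivity
  rw [MeasureTheory.setIntegral_congr_fun measurableSet_Ioi
      (fun t ht => sph_expand δ hδ k u t hu ht)]
  have hint : ∀ m : ℕ, Integrable (g m) (volume.restrict (Set.Ioi 0)) := by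
    intro m
    exact (Real.GammaIntegral_convergent (hexp m)).const_mul _
  have hval : ∀ m : ℕ, (∫ t in Set.Ioi (0:ℝ), g m t)
      = Real.Gamma δ / Real.Gamma (δ + k) *
          ((-1:ℝ)^m * u^m * Real.Gamma (δ + k + m) / (m.factorial * Real.Gamma (δ + m))) := by
    intro m
    simp only [hg]
    rw [MeasureTheory.integral_const_mul, ← Real.Gamma_eq_integral (hexp m)]
    ring
  have hnormval : ∀ m : ℕ, (∫ t in Set.Ioi (0:ℝ), ‖g m t‖)
      = Real.Gamma δ / Real.Gamma (δ + k) *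
          (u^m * Real.Gamma (δ + k + m) / (m.factorial * Real.Gamma (δ + m))) := by
    intro m
    have habs : ∀ t ∈ Set.Ioi (0:ℝ), ‖g m t‖
        = Real.Gamma δ / Real.Gamma (δ + k) * (u^m / (m.factorial * Real.Gamma (δ + m))) *
            (Real.exp (-t) * t ^ (δ + (k:ℝ) + m - 1)) := by
      intro t ht
      have ht' : (0:ℝ) < t := ht
      have h1 : (0:ℝ) ≤ Real.exp (-t) * t ^ (δ + (k:ℝ) + m - 1) := by positivity
      have hcnn : (0:ℝ) ≤ Real.Gamma δ / Real.Gamma (δ + k) *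
          (u^m / (m.factorial * Real.Gamma (δ + m))) :=
        mul_nonneg (le_of_lt (div_pos hΓδ hΓδk))
          (div_nonneg (pow_nonneg hu m) (le_of_lt (mul_pos (hfac m) (hΓδm m))))
      have h2 : Real.Gamma δ / Real.Gamma (δ + k) *
            ((-1:ℝ)^m * u^m / (m.factorial * Real.Gamma (δ + m)))
          = (-1:ℝ)^m * (Real.Gamma δ / Real.Gamma (δ + k) *
              (u^m / (m.factorial * Real.Gamma (δ + m)))) := by ring
      simp only [hg]
      rw [Real.norm_eq_abs, abs_mul, h2, abs_mul, abs_pow, abs_neg, abs_one, one_pow, one_mul,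
        abs_of_nonneg hcnn, abs_of_nonneg h1]
    rw [MeasureTheory.setIntegral_congr_fun measurableSet_Ioi habs,
      MeasureTheory.integral_const_mul, ← Real.Gamma_eq_integral (hexp m)]
    try ring
  have hsum : Summable (fun m => ∫ t in Set.Ioi (0:ℝ), ‖g m t‖) := by
    apply Summable.congr (((sumASum δ hδ k u hu).mul_left
        (Real.Gamma δ / Real.Gamma (δ + k))))
    intro m
    rw [hnormval m]
    try ring
  rw [← MeasureTheory.integral_tsum_of_summable_integral_norm hint hsum]
  exact tsum_congr hval

lemma lhs_eq (δ : ℝ) (hδ : 1 ≤ δ) (k : ℕ) (u : ℝ) (hu : 0 ≤ u) :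
    (Nat.factorial k * Real.Gamma δ / Real.Gamma (δ + k)) * Real.exp (-u) *
        lagPoly (δ - 1) k u
      = ∑' m : ℕ, Real.Gamma δ / Real.Gamma (δ + k) *
          ((-1:ℝ)^m * u^m * Real.Gamma (δ + k + m) / (m.factorial * Real.Gamma (δ + m))) := by
  have hδ0 : (0:ℝ) < δ := lt_of_lt_of_le one_pos hδ
  set K : ℝ := Nat.factorial k * Real.Gamma δ / Real.Gamma (δ + k) with hK
  set H : ℕ → ℕ → ℝ := fun i m => if i ≤ m then
      Real.Gamma δ / Real.Gamma (δ + k) * ((-1:ℝ)^m * u^m) *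
        ((k.factorial : ℝ) * Real.Gamma (δ + k) /
          (Real.Gamma (δ + i) * (k-i).factorial * i.factorial * (m-i).factorial))
    else 0 with hH
  have hHsummable : ∀ i : ℕ, Summable (H i) := by
    intro i
    have hzero : ∀ m : ℕ, ¬ i ≤ m → H i m = 0 := by
      intro m hm; simp only [hH]; rw [if_neg hm]
    have hinj : Function.Injective (fun j : ℕ => i + j) := add_right_injective i
    have hrange : ∀ m ∉ Set.range (fun j : ℕ => i + j), H i m = 0 := by
      intro m hm
      apply hzero
      intro hle
      exact hm ⟨m - i, by simpa using Nat.add_sub_cancel' hle⟩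
    have hsupp : Function.support (H i) ⊆ Set.range (fun j : ℕ => i + j) := by
      intro m hm
      by_contra hmem
      exact hm (hrange m hmem)
    rw [← hinj.summable_iff hrange]
    apply Summable.congr ((Real.summable_pow_div_factorial (-u)).mul_left
      (Real.Gamma δ / Real.Gamma (δ + k) * ((-1:ℝ)^i * u^i) *
        ((k.factorial : ℝ) * Real.Gamma (δ + k) /
          (Real.Gamma (δ + i) * (k-i).factorial * i.factorial))))
    intro j
    simp only [Function.comp, hH]
    rw [if_pos (Nat.le_add_right i j), Nat.add_sub_cancel_left, pow_add, pow_add, neg_pow u j]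
    ring
  have hterm : ∀ i ∈ Finset.range (k+1),
      K * Real.exp (-u) * ((-1:ℝ)^i * Real.Gamma ((k:ℝ) + (δ-1) + 1) * u^i /
        (Real.Gamma ((i:ℝ) + (δ-1) + 1) * (Nat.factorial (k - i)) * (Nat.factorial i)))
      = ∑' m : ℕ, H i m := by
    intro i _
    have e1 : ((k:ℝ) + (δ-1) + 1) = δ + k := by ring
    have e2 : ((i:ℝ) + (δ-1) + 1) = δ + i := by ring
    rw [e1, e2, exp_tsum (-u), ← tsum_mul_left, ← tsum_mul_right]
    have hzero : ∀ m : ℕ, ¬ i ≤ m → H i m = 0 := by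
      intro m hm; simp only [hH]; rw [if_neg hm]
    have hinj : Function.Injective (fun j : ℕ => i + j) := add_right_injective i
    have hrange : ∀ m ∉ Set.range (fun j : ℕ => i + j), H i m = 0 := by
      intro m hm
      apply hzero
      intro hle
      exact hm ⟨m - i, by simpa using Nat.add_sub_cancel' hle⟩
    have hsupp : Function.support (H i) ⊆ Set.range (fun j : ℕ => i + j) := by
      intro m hm
      by_contra hmem
      exact hm (hrange m hmem)
    rw [← hinj.tsum_eq hsupp]
    apply tsum_congr
    intro j
    simp only [hH]
    rw [if_pos (Nat.le_add_right i j), Nat.add_sub_cancel_left, pow_add, pow_add, neg_pow u j, hK]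
    ring
  unfold lagPoly
  rw [Finset.mul_sum, Finset.sum_congr rfl hterm, ← Summable.tsum_finsetSum (fun i _ => hHsummable i)]
  apply tsum_congr
  intro m
  have hsum_eq : ∑ i ∈ Finset.range (k+1), H i m
      = Real.Gamma δ / Real.Gamma (δ + k) * ((-1:ℝ)^m * u^m) *
          ∑ i ∈ Finset.range (k+1), (if i ≤ m then
            (k.factorial : ℝ) * Real.Gamma (δ + k) /
              (Real.Gamma (δ + i) * (k-i).factorial * i.factorial * (m-i).factorial)
          else 0) := by
    rw [Finset.mul_sum]
    apply Finset.sum_congr rfl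
    intro i _
    simp only [hH]
    rw [mul_ite, mul_zero]
  rw [hsum_eq, gammaVdm δ hδ0 k m]
  ring

/-- Intertwining identity for the quantum Bessel semigroup of dimension `δ ≥ 1` at the
critical time `t = -s`: the process reaches the vertical axis with a
Gamma(δ+k, -s) distributed second coordinate. -/
theorem quantum_bessel_intertwining_critical
    (δ : ℝ) (hδ : 1 ≤ δ) (k : ℕ) (s : ℝ) (hs : s < 0) (x : ℝ) (hx : 0 ≤ x) :
    (Nat.factorial k * Real.Gamma δ / Real.Gamma (δ + k)) * Real.exp (s * x ^ 2) *
        lagPoly (δ - 1) k (-s * x ^ 2) =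
      ∫ r in Set.Ioi (0 : ℝ),
        sphBessel (δ - 1) (2 * x * Real.sqrt r) *
          (1 / Real.Gamma (δ + k) * Real.exp (r / s) * (-r / s) ^ (δ + (k : ℝ) - 1) *
            (-1 / s)) := by
  have hsne : s ≠ 0 := ne_of_lt hs
  have hns : (0:ℝ) < -s := by linarith
  set u : ℝ := -s * x ^ 2 with hu_def
  have hu : 0 ≤ u := by positivity
  set F : ℝ → ℝ := fun r => sphBessel (δ - 1) (2 * x * Real.sqrt r) *
      (1 / Real.Gamma (δ + k) * Real.exp (r / s) * (-r / s) ^ (δ + (k : ℝ) - 1) *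
        (-1 / s)) with hF
  have hFts : ∀ t : ℝ, F (-s * t) = sphBessel (δ - 1) (2 * Real.sqrt (u * t)) *
      (1 / Real.Gamma (δ + k) * Real.exp (-t) * t ^ (δ + (k:ℝ) - 1)) * (-1 / s) := by
    intro t
    have e1 : -s * t / s = -t := by field_simp; try ring
    have e2 : -(-s * t) / s = t := by field_simp; try ring
    have e3 : 2 * x * Real.sqrt (-s * t) = 2 * Real.sqrt (u * t) := by
      rw [show u * t = x^2 * (-s * t) by rw [hu_def]; ring, Real.sqrt_mul (sq_nonneg x),
        Real.sqrt_sq hx]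
      ring
    simp only [hF, e1, e2, e3]
    ring
  have hcomp := MeasureTheory.integral_comp_mul_left_Ioi F 0 hns
  rw [mul_zero] at hcomp
  have hsub : (∫ r in Set.Ioi (0:ℝ), F r) = (-s) * ∫ t in Set.Ioi (0:ℝ), F (-s * t) := by
    rw [hcomp, smul_eq_mul, ← mul_assoc, mul_inv_cancel₀ (ne_of_gt hns), one_mul]
  have hstep : (∫ t in Set.Ioi (0:ℝ), F (-s * t))
      = (∫ t in Set.Ioi (0:ℝ), sphBessel (δ - 1) (2 * Real.sqrt (u * t)) *
          (1 / Real.Gamma (δ + k) * Real.exp (-t) * t ^ (δ + (k:ℝ) - 1))) * (-1 / s) := by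
    rw [← MeasureTheory.integral_mul_const]
    simp only [hFts]
  have hRHS : (∫ r in Set.Ioi (0:ℝ), F r)
      = ∑' m : ℕ, Real.Gamma δ / Real.Gamma (δ + k) *
          ((-1:ℝ)^m * u^m * Real.Gamma (δ + k + m) / (m.factorial * Real.Gamma (δ + m))) := by
    have hc : ∀ T : ℝ, -s * (T * (-1 / s)) = T := by
      intro T; field_simp
    rw [hsub, hstep, rhs_eq δ hδ k u hu, hc]
  have hLHS : Real.exp (s * x ^ 2) = Real.exp (-u) := by
    congr 1
    rw [hu_def]; ring
  rw [hLHS, lhs_eq δ hδ k u hu, ← hRHS]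
end

section
/- Let δ ≥ 1 be real, t > 0 and y₁ ≥ 0. Then for every x ≥ 0 and w ∈ ℝ, exp(t(−iw − x²/2)) · j_{δ−1}(2√(y₁) x) = Σ_{l=0}^{∞} (1/l!)(y₁/t)^{l} e^{−y₁/t} · φ^{(δ)}_{t,l}(x, −w), the series on the right converging absolutely. (This verifies the intertwining identity for the quantum Bessel semigroup of dimension δ started from a point (0, y₁) on the vertical axis, with Poisson(y₁/t) mixing weights.) -/
open Real

/-- Character of the first kind `φ^{(δ)}_{τ,m}(x,w)` of the Laguerre hypergroup of
order `δ - 1`. -/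
noncomputable def lagChar (δ τ : ℝ) (m : ℕ) (x w : ℝ) : ℂ :=
  ((Nat.factorial m * Real.Gamma δ / Real.Gamma (m + δ) : ℝ) : ℂ) *
    Complex.exp (Complex.I * τ * w - (|τ| * x ^ 2 / 2 : ℝ)) *
    ((lagPoly (δ - 1) m (|τ| * x ^ 2) : ℝ) : ℂ)

lemma gamma_fact_le (δ : ℝ) (hδ : 1 ≤ δ) :
    ∀ i : ℕ, Real.Gamma δ * i.factorial ≤ Real.Gamma (i + δ) := by
  intro i
  induction i with
  | zero => simp
  | succ n ih =>
    have hpos : (0 : ℝ) < (n : ℝ) + δ := by positivity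
    have hΓ : Real.Gamma ((n : ℝ) + δ) > 0 := Real.Gamma_pos_of_pos hpos
    have h1 : Real.Gamma ((n + 1 : ℕ) + δ) = ((n : ℝ) + δ) * Real.Gamma ((n : ℝ) + δ) := by
      rw [show ((n + 1 : ℕ) : ℝ) + δ = ((n : ℝ) + δ) + 1 by push_cast; ring,
        Real.Gamma_add_one hpos.ne']
    rw [h1]
    have h2 : (Real.Gamma δ * n.factorial) * ((n : ℝ) + 1) ≤
        Real.Gamma ((n : ℝ) + δ) * ((n : ℝ) + δ) := by
      apply mul_le_mul ih (by linarith) (by positivity) hΓ.le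
    calc Real.Gamma δ * (n + 1).factorial
        = (Real.Gamma δ * n.factorial) * ((n : ℝ) + 1) := by
          rw [Nat.factorial_succ]; push_cast; ring
      _ ≤ Real.Gamma ((n : ℝ) + δ) * ((n : ℝ) + δ) := h2
      _ = ((n : ℝ) + δ) * Real.Gamma ((n : ℝ) + δ) := by ring

/-- Intertwining identity for the quantum Bessel semigroup of dimension `δ ≥ 1` started
from a point `(0, y₁)` on the vertical axis, with Poisson(y₁/t) mixing weights. -/
theorem quantum_bessel_intertwining_axis
    (δ : ℝ) (hδ : 1 ≤ δ) (t y₁ : ℝ) (ht : 0 < t) (hy : 0 ≤ y₁)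
    (x : ℝ) (hx : 0 ≤ x) (w : ℝ) :
    (Summable fun l : ℕ =>
      ‖((1 / Nat.factorial l * (y₁ / t) ^ l * Real.exp (-(y₁ / t)) : ℝ) : ℂ) *
          lagChar δ t l x (-w)‖) ∧
    Complex.exp ((t : ℂ) * (-Complex.I * (w : ℂ) - (x : ℂ) ^ 2 / 2)) *
        ((sphBessel (δ - 1) (2 * Real.sqrt y₁ * x) : ℝ) : ℂ) =
      ∑' l : ℕ,
        ((1 / Nat.factorial l * (y₁ / t) ^ l * Real.exp (-(y₁ / t)) : ℝ) : ℂ) *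
          lagChar δ t l x (-w) := by
  have hΓδ : (0 : ℝ) < Real.Gamma δ := Real.Gamma_pos_of_pos (by linarith)
  set A : ℝ := y₁ / t with hA
  have hA0 : 0 ≤ A := by rw [hA]; positivity
  set s : ℝ := t * x ^ 2 with hs
  set c : ℝ := y₁ * x ^ 2 with hc
  have hc0 : 0 ≤ c := by rw [hc]; positivity
  have hcAs : c = A * s := by rw [hc, hA, hs]; field_simp
  set u : ℕ → ℝ := fun i => Real.Gamma δ * (-c) ^ i / (Real.Gamma (i + δ) * i.factorial)
    with hu
  set v : ℕ → ℝ := fun k => A ^ k / k.factorial with hv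
  have hΓi : ∀ i : ℕ, (0 : ℝ) < Real.Gamma ((i : ℝ) + δ) := fun i =>
    Real.Gamma_pos_of_pos (by positivity)
  -- summability of ‖u‖
  have hus : Summable fun i => ‖u i‖ := by
    refine Summable.of_nonneg_of_le (fun i => norm_nonneg _) (fun i => ?_)
      (Real.summable_pow_div_factorial c)
    have hfi : (0 : ℝ) < i.factorial := by positivity
    have h1 : ‖u i‖ = Real.Gamma δ * c ^ i / (Real.Gamma ((i : ℝ) + δ) * i.factorial) := by
      rw [hu]
      rw [Real.norm_eq_abs, abs_div, abs_mul, abs_pow, abs_neg, abs_of_nonneg hc0,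
        abs_mul, abs_of_pos hΓδ, abs_of_pos (hΓi i), Nat.abs_cast]
    rw [h1, div_le_div_iff₀ (by positivity) hfi]
    have h2 := gamma_fact_le δ hδ i
    have h3 : (0 : ℝ) ≤ c ^ i := by positivity
    have hfi1 : (1 : ℝ) ≤ i.factorial := by exact_mod_cast Nat.one_le_iff_ne_zero.mpr i.factorial_ne_zero
    calc Real.Gamma δ * c ^ i * i.factorial = c ^ i * (Real.Gamma δ * i.factorial) := by ring
      _ ≤ c ^ i * Real.Gamma ((i : ℝ) + δ) := mul_le_mul_of_nonneg_left h2 h3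
      _ ≤ c ^ i * (Real.Gamma ((i : ℝ) + δ) * i.factorial) :=
          mul_le_mul_of_nonneg_left (le_mul_of_one_le_right (hΓi i).le hfi1) h3
  -- summability of ‖v‖
  have hvs : Summable fun k => ‖v k‖ := by
    have : ∀ k, ‖v k‖ = A ^ k / k.factorial := by
      intro k
      rw [hv, Real.norm_eq_abs, abs_of_nonneg (by positivity)]
    simpa [this] using Real.summable_pow_div_factorial A
  set r : ℕ → ℝ := fun l => ∑ i ∈ Finset.range (l + 1), u i * v (l - i) with hr
  have hsum_norm : Summable fun l => ‖r l‖ :=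
    summable_norm_sum_mul_range_of_summable_norm hus hvs
  have hrsum : Summable r := hsum_norm.of_norm
  have hprod : ∑' l, r l = (∑' i, u i) * (∑' k, v k) :=
    (tsum_mul_tsum_eq_tsum_sum_range_of_summable_norm hus hvs).symm
  -- identify r l with the Laguerre polynomial expression
  have hrL : ∀ l : ℕ, r l =
      Real.Gamma δ * A ^ l / Real.Gamma ((l : ℝ) + δ) * lagPoly (δ - 1) l s := by
    intro l
    rw [hr, lagPoly, Finset.mul_sum]
    refine Finset.sum_congr rfl fun i hi => ?_
    have hil : i ≤ l := Nat.lt_succ_iff.mp (Finset.mem_range.mp hi)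
    have hAl : A ^ l = A ^ i * A ^ (l - i) := by
      rw [← pow_add, Nat.add_sub_cancel' hil]
    have hΓl := (hΓi l).ne'
    have hΓii := (hΓi i).ne'
    have hfl : ((l - i).factorial : ℝ) ≠ 0 := Nat.cast_ne_zero.mpr (Nat.factorial_ne_zero _)
    have hfi : ((i).factorial : ℝ) ≠ 0 := Nat.cast_ne_zero.mpr (Nat.factorial_ne_zero _)
    rw [show (l : ℝ) + (δ - 1) + 1 = (l : ℝ) + δ by ring,
      show (i : ℝ) + (δ - 1) + 1 = (i : ℝ) + δ by ring]
    rw [hu, hv]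
    simp only
    rw [neg_pow, hcAs, mul_pow, hAl]
    field_simp
  -- tsum of u is the spherical Bessel value
  have hbessel : sphBessel (δ - 1) (2 * Real.sqrt y₁ * x) = ∑' i, u i := by
    rw [sphBessel, ← tsum_mul_left]
    refine tsum_congr fun m => ?_
    have h1 : (2 * Real.sqrt y₁ * x / 2) ^ (2 * m) = c ^ m := by
      rw [show 2 * Real.sqrt y₁ * x / 2 = Real.sqrt y₁ * x by ring, pow_mul, mul_pow,
        Real.sq_sqrt hy, hc]
    rw [h1, show δ - 1 + 1 = δ by ring, show δ - 1 + (m : ℝ) + 1 = (m : ℝ) + δ by ring]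
    rw [hu]
    simp only
    rw [neg_pow]
    ring
  -- tsum of v is exp A
  have hexpv : (∑' k, v k) = Real.exp A := by
    rw [Real.exp_eq_exp_ℝ, NormedSpace.exp_eq_tsum_div]
  have hreal : ∑' l, r l = Real.exp A * sphBessel (δ - 1) (2 * Real.sqrt y₁ * x) := by
    rw [hprod, hexpv, hbessel]; ring
  -- complex side
  set E : ℂ := Complex.exp (Complex.I * t * (-w) - ((t * x ^ 2 / 2 : ℝ) : ℂ)) with hE
  have habs : |t| = t := abs_of_pos ht
  have hterm : ∀ l : ℕ,
      ((1 / Nat.factorial l * A ^ l * Real.exp (-A) : ℝ) : ℂ) * lagChar δ t l x (-w) =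
        (E * ((Real.exp (-A) : ℝ) : ℂ)) * ((r l : ℝ) : ℂ) := by
    intro l
    have hfl : ((l.factorial : ℝ)) ≠ 0 := Nat.cast_ne_zero.mpr (Nat.factorial_ne_zero _)
    have hflC : ((l.factorial : ℂ)) ≠ 0 := Nat.cast_ne_zero.mpr (Nat.factorial_ne_zero _)
    have hΓlC : ((Real.Gamma ((l : ℝ) + δ) : ℂ)) ≠ 0 := Complex.ofReal_ne_zero.mpr (hΓi l).ne'
    rw [lagChar, habs, hrL l, hs, hE]
    push_cast
    field_simp
  constructor
  · have h1 : ∀ l : ℕ,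
        ‖((1 / Nat.factorial l * A ^ l * Real.exp (-A) : ℝ) : ℂ) * lagChar δ t l x (-w)‖ =
          ‖E * ((Real.exp (-A) : ℝ) : ℂ)‖ * ‖r l‖ := by
      intro l
      rw [hterm l, norm_mul, Complex.norm_real]
    exact (hsum_norm.mul_left ‖E * ((Real.exp (-A) : ℝ) : ℂ)‖).congr fun l => (h1 l).symm
  · rw [tsum_congr hterm, tsum_mul_left, ← Complex.ofReal_tsum, hreal]
    have hEE : Complex.exp ((t : ℂ) * (-Complex.I * (w : ℂ) - (x : ℂ) ^ 2 / 2)) = E := by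
      rw [hE]
      congr 1
      push_cast
      ring
    rw [hEE]
    push_cast
    have h9 : Complex.exp (-(A : ℂ)) * Complex.exp ((A : ℂ)) = 1 := by
      rw [← Complex.exp_add]; simp
    linear_combination (-(E * ((sphBessel (δ - 1) (2 * Real.sqrt y₁ * x) : ℝ) : ℂ))) * h9
end

section
/- Let δ ≥ 1 be real, t > 0, u > 0 and x ∈ ℝ. Then exp(−t x²/2) · j_{δ/2−1}(u x) = ∫₀^∞ j_{δ/2−1}(x y) · p_t(u, y) dy, where p_t is the BES(δ) transition density. (This is the intertwining identity exp(−t|x|²/2) η_u^{(δ)}(−x) = ∫₀^∞ η_v^{(δ)}(−x) p_t(u, dv) identifying the radial restriction of the heat semigroup as the δ-dimensional Bessel semigroup.) -/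
open Real MeasureTheory

/-- Imaginary-argument normalized spherical Bessel function `ĵ_ν(z) = j_ν(iz)`. -/
noncomputable def sphBesselI (ν : ℝ) (z : ℝ) : ℝ :=
  Real.Gamma (ν + 1) *
    ∑' m : ℕ, (z / 2) ^ (2 * m) / (Nat.factorial m * Real.Gamma (ν + m + 1))

/-- Transition density `p_t(x,y)` of the `δ`-dimensional Bessel process BES(δ). -/
noncomputable def besselDensity (δ t x y : ℝ) : ℝ :=
  2 * y ^ (δ - 1) * (2 * t) ^ (-(δ / 2)) / Real.Gamma (δ / 2) *
    sphBesselI (δ / 2 - 1) (x * y / t) * Real.exp (-(x ^ 2 + y ^ 2) / (2 * t))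

/-!
Put `s = δ/2`, `c_n = 1 / (n! Γ(s+n))`, `a = -t x²/2` and `b = u²/(2t)`. Expanding `j_{s-1}(xy)`
and `ĵ_{s-1}(uy/t)` in power series turns the integrand into a double series of Gaussian moments
`∫₀^∞ y^(2s-1+2n) e^(-y²/2t) dy = (2t)^(s+n) Γ(s+n) / 2`, which is integrated termwise; the right
side becomes `Γ(s) e^(-b) Σ_{m,k} a^m c_m b^k c_k Γ(s+m+k)`. On the left, `ab = -(ux/2)²`, so
`e^a j_{s-1}(ux) = Γ(s) e^(-b) · e^a e^b Σ_n (ab)^n c_n`, and collecting this triple Cauchy product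
by the powers of `a` and `b` gives the same double series, by the Chu–Vandermonde type identity
`Σ_n C(m,n) k(k-1)⋯(k-n+1) / Γ(s+n) = Γ(s+m+k) / (Γ(s+m) Γ(s+k))`.
-/

open Set

theorem Gamma_add_nat_ne_zero {s : ℝ} (hs : 0 < s) (n : ℕ) : Gamma (s + n) ≠ 0 :=
  (Gamma_pos_of_pos (by positivity)).ne'

theorem Gamma_add_nat_succ {s : ℝ} (hs : 0 < s) (n : ℕ) :
    Gamma (s + (n + 1 : ℕ)) = (s + n) * Gamma (s + n) := by
  rw [Nat.cast_succ, ← add_assoc, Gamma_add_one (by positivity)]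

noncomputable def besselCoeff (s : ℝ) (m : ℕ) : ℝ := ((m.factorial : ℝ) * Gamma (s + m))⁻¹

theorem besselCoeff_succ {s : ℝ} (hs : 0 < s) (m : ℕ) :
    besselCoeff s (m + 1) = besselCoeff s m / ((m + 1) * (s + m)) := by
  rw [besselCoeff, besselCoeff, Gamma_add_nat_succ hs, Nat.factorial_succ, Nat.cast_mul,
    Nat.cast_succ, div_eq_mul_inv, ← mul_inv]
  ring

theorem summable_norm_pow_mul_besselCoeff {s : ℝ} (hs : 0 < s) (w : ℝ) :
    Summable fun m : ℕ => ‖w ^ m * besselCoeff s m‖ := by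
  refine summable_norm_iff.mpr <| summable_of_ratio_norm_eventually_le one_half_lt_one ?_
  filter_upwards [Filter.eventually_ge_atTop ⌈2 * |w|⌉₊, Filter.eventually_ge_atTop 1]
    with m hwm hm
  have hwm : 2 * |w| ≤ m := Nat.ceil_le.mp hwm
  have hm : (1 : ℝ) ≤ m := by exact_mod_cast hm
  have hden : 2 * |w| ≤ (m + 1) * (s + m) := by nlinarith
  calc ‖w ^ (m + 1) * besselCoeff s (m + 1)‖
      = ‖w ^ m * besselCoeff s m‖ * (|w| / ((m + 1) * (s + m))) := by
        rw [besselCoeff_succ hs, pow_succ, norm_mul, norm_mul, norm_mul, norm_div,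
          Real.norm_of_nonneg (by positivity : (0 : ℝ) ≤ (m + 1) * (s + m)), Real.norm_eq_abs w]
        ring
    _ ≤ ‖w ^ m * besselCoeff s m‖ * (1 / 2) := by
        refine mul_le_mul_of_nonneg_left ?_ (norm_nonneg _)
        rw [div_le_iff₀ (by positivity)]
        linarith
    _ = 1 / 2 * ‖w ^ m * besselCoeff s m‖ := mul_comm _ _

theorem sphBessel_sub_one_eq (s z : ℝ) :
    sphBessel (s - 1) z = Gamma s * ∑' m : ℕ, (-(z / 2) ^ 2) ^ m * besselCoeff s m := by
  simp only [sphBessel, besselCoeff, sub_add_cancel, sub_add_eq_add_sub, neg_pow (_ ^ 2),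
    ← pow_mul, div_eq_mul_inv]

theorem sphBesselI_sub_one_eq (s z : ℝ) :
    sphBesselI (s - 1) z = Gamma s * ∑' m : ℕ, ((z / 2) ^ 2) ^ m * besselCoeff s m := by
  simp only [sphBesselI, besselCoeff, sub_add_cancel, sub_add_eq_add_sub, ← pow_mul,
    div_eq_mul_inv]

theorem sphBessel_mul_sphBesselI_sub_one {s : ℝ} (hs : 0 < s) (x v y : ℝ) :
    sphBessel (s - 1) (x * y) * sphBesselI (s - 1) (v * y) =
      Gamma s ^ 2 * ∑' p : ℕ × ℕ, (-(x / 2) ^ 2) ^ p.1 * besselCoeff s p.1 *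
        (((v / 2) ^ 2) ^ p.2 * besselCoeff s p.2) * y ^ (2 * (p.1 + p.2)) := by
  rw [sphBessel_sub_one_eq, sphBesselI_sub_one_eq, mul_mul_mul_comm, ← sq,
    tsum_mul_tsum_of_summable_norm (summable_norm_pow_mul_besselCoeff hs _)
      (summable_norm_pow_mul_besselCoeff hs _)]
  congr 1
  refine tsum_congr fun p => ?_
  simp only [mul_div_right_comm _ y, mul_pow, ← neg_mul]
  ring

theorem sum_range_succ_choose_mul {R : Type*} [CommSemiring R] (f : ℕ → R) (m : ℕ) :
    ∑ n ∈ Finset.range (m + 2), ((m + 1).choose n : R) * f n =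
      ∑ n ∈ Finset.range (m + 1), (m.choose n : R) * (f n + f (n + 1)) := by
  have hshift := Finset.sum_range_succ' (fun n => (m.choose n : R) * f n) (m + 1)
  rw [Finset.sum_range_succ _ (m + 1), Nat.choose_succ_self, Nat.cast_zero, zero_mul,
    add_zero] at hshift
  simp only [mul_add, Finset.sum_add_distrib]
  rw [Finset.sum_range_succ', hshift]
  simp only [Nat.choose_succ_succ, Nat.cast_add, add_mul, Finset.sum_add_distrib,
    Nat.choose_zero_right]
  ring

theorem descFactorial_div_Gamma_add_succ {s : ℝ} (hs : 0 < s) (k n : ℕ) :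
    (k.descFactorial n : ℝ) / Gamma (s + n) + k.descFactorial (n + 1) / Gamma (s + (n + 1 : ℕ)) =
      (s + k) * (k.descFactorial n / Gamma (s + 1 + n)) := by
  have hΓ := Gamma_add_nat_ne_zero hs n
  have hsn : s + n ≠ 0 := by positivity
  rw [Gamma_add_nat_succ hs, add_right_comm s 1, Gamma_add_one hsn, Nat.descFactorial_succ]
  rcases le_or_gt n k with hnk | hkn
  · rw [Nat.cast_mul, Nat.cast_sub hnk]
    field_simp
    ring
  · simp [Nat.descFactorial_eq_zero_iff_lt.mpr hkn]

theorem sum_choose_mul_descFactorial_div_Gamma {s : ℝ} (hs : 0 < s) (m k : ℕ) :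
    ∑ n ∈ Finset.range (m + 1), (m.choose n : ℝ) * (k.descFactorial n / Gamma (s + n)) =
      Gamma (s + m + k) / (Gamma (s + m) * Gamma (s + k)) := by
  induction m generalizing s with
  | zero =>
    have : Gamma s ≠ 0 := (Gamma_pos_of_pos hs).ne'
    simp [field]
  | succ m ih =>
    have hsk : s + k ≠ 0 := by positivity
    have := Gamma_add_nat_ne_zero hs k
    rw [sum_range_succ_choose_mul]
    simp_rw [descFactorial_div_Gamma_add_succ hs, mul_left_comm _ (s + k), ← Finset.mul_sum,
      ih (by positivity : 0 < s + 1), add_right_comm s 1 k, Gamma_add_one hsk]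
    push_cast
    field_simp
    ring_nf

theorem hasSum_expSeries_mul_expSeries_mul_besselSeries {s : ℝ} (hs : 0 < s) (a b : ℝ) :
    HasSum (fun q : ℕ × ℕ × ℕ => a ^ q.1 / q.1.factorial *
        (b ^ q.2.1 / q.2.1.factorial * ((a * b) ^ q.2.2 * besselCoeff s q.2.2)))
      (exp (a + b) * ∑' n : ℕ, (a * b) ^ n * besselCoeff s n) := by
  have hexp (w : ℝ) : Summable fun p : ℕ => ‖w ^ p / p.factorial‖ := by
    simpa [norm_div, norm_pow] using Real.summable_pow_div_factorial |w|
  have hinner := (hexp b).mul_norm (summable_norm_pow_mul_besselCoeff hs (a * b))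
  rw [exp_add, mul_assoc]
  simp only [exp_eq_exp_ℝ, NormedSpace.exp_eq_tsum_div]
  rw [tsum_mul_tsum_of_summable_norm (hexp b) (summable_norm_pow_mul_besselCoeff hs (a * b)),
    tsum_mul_tsum_of_summable_norm (hexp a) hinner]
  exact (summable_mul_of_summable_norm (hexp a) hinner).hasSum

theorem hasSum_pow_div_factorial_mul_choose_mul_descFactorial_div_Gamma {s : ℝ} (hs : 0 < s)
    (a b : ℝ) :
    HasSum (fun r : (ℕ × ℕ) × ℕ => a ^ r.1.1 / r.1.1.factorial * (b ^ r.1.2 / r.1.2.factorial) *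
        (r.1.1.choose r.2 * (r.1.2.descFactorial r.2 / Gamma (s + r.2))))
      (exp (a + b) * ∑' n : ℕ, (a * b) ^ n * besselCoeff s n) := by
  -- the triple series, reindexed by the exponents `(p + n, q + n)` of `a` and `b`
  set e : ℕ × ℕ × ℕ → (ℕ × ℕ) × ℕ := fun q => ((q.1 + q.2.2, q.2.1 + q.2.2), q.2.2)
  have he : Function.Injective e := by
    rintro ⟨p, q, n⟩ ⟨p', q', n'⟩ h
    simp only [e, Prod.mk.injEq] at h ⊢
    omega
  refine (he.hasSum_iff fun r hr => ?_).mp ?_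
  · obtain ⟨⟨m, k⟩, n⟩ := r
    have : m < n ∨ k < n := by
      by_contra! h
      exact hr ⟨(m - n, k - n, n), by simp only [e]; congr <;> omega⟩
    rcases this with h | h <;>
      simp [Nat.choose_eq_zero_of_lt, Nat.descFactorial_eq_zero_iff_lt.mpr, h]
  · convert hasSum_expSeries_mul_expSeries_mul_besselSeries hs a b using 1
    funext ⟨p, q, n⟩
    have hp := Nat.add_choose_mul_factorial_mul_factorial p n
    have hq := Nat.factorial_mul_descFactorial (Nat.le_add_left n q)
    rw [Nat.add_sub_cancel] at hq
    have : ((p + n).choose n : ℝ) ≠ 0 := by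
      exact_mod_cast (Nat.choose_pos (Nat.le_add_left n p)).ne'
    have := Gamma_add_nat_ne_zero hs n
    simp only [e, Function.comp, besselCoeff]
    rw [← hp, ← hq]
    push_cast
    field_simp
    ring

theorem hasSum_pow_mul_besselCoeff_mul_Gamma {s : ℝ} (hs : 0 < s) (a b : ℝ) :
    HasSum (fun p : ℕ × ℕ => a ^ p.1 * besselCoeff s p.1 * (b ^ p.2 * besselCoeff s p.2) *
        Gamma (s + p.1 + p.2))
      (exp (a + b) * ∑' n : ℕ, (a * b) ^ n * besselCoeff s n) := by
  refine (hasSum_pow_div_factorial_mul_choose_mul_descFactorial_div_Gamma hs a b).prod_fiberwise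
    fun ⟨m, k⟩ => ?_
  convert hasSum_sum_of_ne_finset_zero (L := .unconditional ℕ) (s := Finset.range (m + 1))
    ?_ using 1
  · have := Gamma_add_nat_ne_zero hs m
    have := Gamma_add_nat_ne_zero hs k
    simp only [← Finset.mul_sum, sum_choose_mul_descFactorial_div_Gamma hs, besselCoeff]
    field_simp
  · intro n hn
    simp [Nat.choose_eq_zero_of_lt (by simpa using hn : m < n)]

theorem rpow_mul_pow_mul_exp_eq {s t y : ℝ} (hy : 0 < y) (n : ℕ) :
    y ^ (2 * s - 1) * y ^ (2 * n) * exp (-y ^ 2 / (2 * t)) =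
      y ^ (2 * s - 1 + 2 * n) * exp (-(2 * t)⁻¹ * y ^ (2 : ℝ)) := by
  rw [rpow_add hy, ← Nat.cast_ofNat, ← Nat.cast_mul, rpow_natCast, Nat.cast_ofNat, rpow_two,
    neg_div, neg_mul, div_eq_inv_mul]

theorem integrableOn_rpow_mul_pow_mul_exp {s t : ℝ} (hs : 0 < s) (ht : 0 < t) (n : ℕ) :
    IntegrableOn (fun y => y ^ (2 * s - 1) * y ^ (2 * n) * exp (-y ^ 2 / (2 * t))) (Ioi 0) :=
  (integrableOn_rpow_mul_exp_neg_mul_rpow (by linarith [(n.cast_nonneg : (0 : ℝ) ≤ n)]) two_pos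
    (by positivity)).congr_fun (fun _ hy => (rpow_mul_pow_mul_exp_eq hy n).symm) measurableSet_Ioi

theorem integral_rpow_mul_pow_mul_exp {s t : ℝ} (hs : 0 < s) (ht : 0 < t) (n : ℕ) :
    ∫ y in Ioi 0, y ^ (2 * s - 1) * y ^ (2 * n) * exp (-y ^ 2 / (2 * t)) =
      (2 * t) ^ s * (2 * t) ^ n * Gamma (s + n) / 2 := by
  rw [setIntegral_congr_fun measurableSet_Ioi fun _ hy => rpow_mul_pow_mul_exp_eq hy n,
    integral_rpow_mul_exp_neg_mul_rpow two_pos (by linarith [(n.cast_nonneg : (0 : ℝ) ≤ n)])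
      (by positivity),
    show -(2 * s - 1 + 2 * n + 1) / 2 = -(s + n) by ring,
    show (2 * s - 1 + 2 * n + 1) / 2 = s + n by ring,
    inv_rpow (by positivity), rpow_neg (by positivity), inv_inv, rpow_add (by positivity),
    rpow_natCast]
  ring

theorem integral_tsum_mul_rpow_mul_pow_mul_exp {ι : Type*} [Countable ι] {s t : ℝ} (hs : 0 < s)
    (ht : 0 < t) (f : ι → ℝ) (d : ι → ℕ)
    (hf : Summable fun i => f i * ((2 * t) ^ s * (2 * t) ^ d i * Gamma (s + d i) / 2)) :
    ∫ y in Ioi 0, ∑' i, f i * (y ^ (2 * s - 1) * y ^ (2 * d i) * exp (-y ^ 2 / (2 * t))) =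
      ∑' i, f i * ((2 * t) ^ s * (2 * t) ^ d i * Gamma (s + d i) / 2) := by
  have hint (i : ι) := (integrableOn_rpow_mul_pow_mul_exp hs ht (d i)).const_mul (f i)
  have hnorm (i : ι) :
      ∫ y in Ioi 0, ‖f i * (y ^ (2 * s - 1) * y ^ (2 * d i) * exp (-y ^ 2 / (2 * t)))‖ =
        |f i * ((2 * t) ^ s * (2 * t) ^ d i * Gamma (s + d i) / 2)| := by
    have := Gamma_pos_of_pos (by positivity : 0 < s + d i)
    rw [setIntegral_congr_fun measurableSet_Ioi fun y (hy : 0 < y) => by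
      rw [norm_mul, Real.norm_eq_abs, Real.norm_of_nonneg (by positivity)], integral_const_mul,
      integral_rpow_mul_pow_mul_exp hs ht, abs_mul, abs_of_nonneg (a := _ / 2) (by positivity)]
  rw [← integral_tsum_of_summable_integral_norm hint (hf.abs.congr fun i => (hnorm i).symm)]
  simp_rw [integral_const_mul, integral_rpow_mul_pow_mul_exp hs ht]

noncomputable def intertwiningCoeff (s t u x : ℝ) (p : ℕ × ℕ) : ℝ :=
  2 * (2 * t) ^ (-s) * exp (-u ^ 2 / (2 * t)) * Gamma s *
    ((-(x / 2) ^ 2) ^ p.1 * besselCoeff s p.1 * (((u / t / 2) ^ 2) ^ p.2 * besselCoeff s p.2))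

theorem sphBessel_mul_besselDensity_eq_tsum {s : ℝ} (hs : 0 < s) (t u x y : ℝ) :
    sphBessel (s - 1) (x * y) * besselDensity (2 * s) t u y =
      ∑' p : ℕ × ℕ, intertwiningCoeff s t u x p *
        (y ^ (2 * s - 1) * y ^ (2 * (p.1 + p.2)) * exp (-y ^ 2 / (2 * t))) := by
  have hΓ : Gamma s ≠ 0 := (Gamma_pos_of_pos hs).ne'
  have hexp : exp (-(u ^ 2 + y ^ 2) / (2 * t)) =
      exp (-u ^ 2 / (2 * t)) * exp (-y ^ 2 / (2 * t)) := by
    rw [← exp_add]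
    ring_nf
  calc _ = (sphBessel (s - 1) (x * y) * sphBesselI (s - 1) (u / t * y)) *
        (2 * y ^ (2 * s - 1) * (2 * t) ^ (-s) / Gamma s * exp (-u ^ 2 / (2 * t)) *
          exp (-y ^ 2 / (2 * t))) := by
        rw [besselDensity, mul_div_cancel_left₀ s two_ne_zero, mul_div_right_comm u y t, hexp]
        ring
    _ = _ := by
        rw [sphBessel_mul_sphBesselI_sub_one hs, ← tsum_mul_left, ← tsum_mul_right]
        refine tsum_congr fun p => ?_
        simp only [intertwiningCoeff]
        field_simp

theorem intertwiningCoeff_mul_moment {s t : ℝ} (ht : 0 < t) (u x : ℝ) (p : ℕ × ℕ) :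
    intertwiningCoeff s t u x p *
        ((2 * t) ^ s * (2 * t) ^ (p.1 + p.2) * Gamma (s + (p.1 + p.2 : ℕ)) / 2) =
      Gamma s * exp (-(u ^ 2 / (2 * t))) *
        ((-(t * x ^ 2 / 2)) ^ p.1 * besselCoeff s p.1 *
          ((u ^ 2 / (2 * t)) ^ p.2 * besselCoeff s p.2) * Gamma (s + p.1 + p.2)) := by
  have ha : (-(t * x ^ 2 / 2)) ^ p.1 = (-(x / 2) ^ 2) ^ p.1 * (2 * t) ^ p.1 := by
    rw [← mul_pow]
    ring
  have hb : (u ^ 2 / (2 * t)) ^ p.2 = ((u / t / 2) ^ 2) ^ p.2 * (2 * t) ^ p.2 := by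
    rw [← mul_pow]
    field_simp
  have h2t : (2 * t) ^ (-s) * (2 * t) ^ s = 1 := by
    rw [← rpow_add (by positivity), neg_add_cancel, rpow_zero]
  simp only [intertwiningCoeff, ha, hb, Nat.cast_add, ← add_assoc, neg_div, pow_add]
  linear_combination (Gamma s * exp (-(u ^ 2 / (2 * t))) *
    ((-(x / 2) ^ 2) ^ p.1 * besselCoeff s p.1 * (((u / t / 2) ^ 2) ^ p.2 * besselCoeff s p.2)) *
    (2 * t) ^ p.1 * (2 * t) ^ p.2 * Gamma (s + p.1 + p.2)) * h2t

theorem bessel_intertwining_general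
    (δ : ℝ) (hδ : 1 ≤ δ) (t u x : ℝ) (ht : 0 < t) :
    Real.exp (-(t * x ^ 2) / 2) * sphBessel (δ / 2 - 1) (u * x) =
      ∫ y in Set.Ioi (0 : ℝ),
        sphBessel (δ / 2 - 1) (x * y) * besselDensity δ t u y := by
  obtain ⟨s, rfl⟩ : ∃ s, δ = 2 * s := ⟨δ / 2, by ring⟩
  have hs : 0 < s := by linarith
  rw [mul_div_cancel_left₀ s two_ne_zero]
  set a := -(t * x ^ 2 / 2)
  set b := u ^ 2 / (2 * t)
  have key := hasSum_pow_mul_besselCoeff_mul_Gamma hs a b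
  have hab : a * b = -(u * x / 2) ^ 2 := by
    simp only [a, b]
    field_simp
  have hexp : exp (-b) * exp (a + b) = exp (-(t * x ^ 2) / 2) := by
    rw [← exp_add, add_comm a, neg_add_cancel_left, neg_div]
  calc exp (-(t * x ^ 2) / 2) * sphBessel (s - 1) (u * x)
      = Gamma s * exp (-b) * (exp (a + b) * ∑' n : ℕ, (a * b) ^ n * besselCoeff s n) := by
        rw [sphBessel_sub_one_eq, ← hab, ← hexp]
        ring
    _ = ∑' p : ℕ × ℕ, intertwiningCoeff s t u x p *
          ((2 * t) ^ s * (2 * t) ^ (p.1 + p.2) * Gamma (s + (p.1 + p.2 : ℕ)) / 2) := by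
        rw [← key.tsum_eq, ← tsum_mul_left]
        exact tsum_congr fun p => (intertwiningCoeff_mul_moment ht u x p).symm
    _ = ∫ y in Ioi 0, sphBessel (s - 1) (x * y) * besselDensity (2 * s) t u y := by
        rw [← integral_tsum_mul_rpow_mul_pow_mul_exp hs ht _ (fun p => p.1 + p.2)
          ((key.summable.mul_left _).congr fun p => (intertwiningCoeff_mul_moment ht u x p).symm)]
        exact setIntegral_congr_fun measurableSet_Ioi fun y _ =>
          (sphBessel_mul_besselDensity_eq_tsum hs t u x y).symm

/-- The intertwining identity identifying the radial restriction of the heat semigroup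
as the `δ`-dimensional Bessel semigroup. -/
theorem bessel_intertwining
    (δ : ℝ) (hδ : 1 ≤ δ) (t u x : ℝ) (ht : 0 < t) (hu : 0 < u) :
    Real.exp (-(t * x ^ 2) / 2) * sphBessel (δ / 2 - 1) (u * x) =
      ∫ y in Set.Ioi (0 : ℝ),
        sphBessel (δ / 2 - 1) (x * y) * besselDensity δ t u y :=
  bessel_intertwining_general δ hδ t u x ht
end

section
/- Let ν > −1 and α > 0 be real, and let β ≥ 0, γ ≥ 0. Then ∫₀^∞ e^{−α v²} ĵ_ν(β v) j_ν(γ v) v^{2ν+1} / (2^ν Γ(ν+1)) dv = (2α)^{−(ν+1)} exp((β² − γ²)/(4α)) j_ν(βγ/(2α)). (Weber–Sonine type integral, the analytic core of the identification of the Bessel semigroup; the hypothesis ν > −1 corresponds exactly to dimension δ = 2ν + 2 > 0.) -/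
open Real MeasureTheory

/-!
Write both Bessel functions through the entire series `E_ν(t) = ∑ tᵐ / (m! Γ(ν + m + 1))`:
`ĵ_ν(z) = Γ(ν + 1) E_ν(z²/4)` and `j_ν(z) = Γ(ν + 1) E_ν(-z²/4)`. Expanding `E_ν(a v²) E_ν(b v²)`
as a double series and integrating term by term against `v^(2ν+1) e^(-α v²)` (Gaussian moments;
the same series with `|a|, |b|` dominates) gives, with `x = a/α` and `y = b/α`,
`α^(-(ν+1))/2 · ∑_{m,n} xᵐ yⁿ Γ(ν+m+n+1) / (m! n! Γ(ν+m+1) Γ(ν+n+1))`.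
This double series is `e^(x+y) E_ν(xy)`: in the triple series of `e^x e^y E_ν(xy)` the coefficient
of `xᵐ yⁿ` is `∑_k C(m,k) C(n,k) k! / (m! n! Γ(ν+k+1))`, and a Chu–Vandermonde-type identity
evaluates the sum over `k` to the Gamma quotient.
-/

open Finset Set
open scoped Nat

lemma Gamma_add_natCast_add_one_pos {ν : ℝ} (hν : -1 < ν) (m : ℕ) : 0 < Gamma (ν + m + 1) :=
  Gamma_pos_of_pos (by linarith [m.cast_nonneg (α := ℝ)])

lemma one_le_Gamma_add_natCast_add_one {ν : ℝ} (hν : -1 < ν) {m : ℕ} (hm : 2 ≤ m) :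
    1 ≤ Gamma (ν + m + 1) := by
  have h2 : (2 : ℝ) ≤ m := by exact_mod_cast hm
  calc 1 = Gamma 2 := Gamma_two.symm
    _ ≤ Gamma (ν + m + 1) :=
      Gamma_strictMonoOn_Ici.monotoneOn (by simp) (by simp; linarith) (by linarith)

lemma summable_norm_pow_div_factorial_mul_Gamma {ν : ℝ} (hν : -1 < ν) (t : ℝ) :
    Summable fun m : ℕ ↦ ‖t ^ m / (m ! * Gamma (ν + m + 1))‖ := by
  refine .of_norm_bounded_eventually_nat (Real.summable_pow_div_factorial |t|) ?_
  filter_upwards [Filter.eventually_ge_atTop 2] with m hm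
  rw [norm_norm, norm_div, norm_pow, Real.norm_eq_abs, norm_mul,
    Real.norm_of_nonneg (Gamma_add_natCast_add_one_pos hν m).le, Real.norm_natCast]
  gcongr
  exact le_mul_of_one_le_right (by positivity) (one_le_Gamma_add_natCast_add_one hν hm)

noncomputable def gammaQuotient (ν : ℝ) (m n : ℕ) : ℝ :=
  Gamma (ν + m + n + 1) / (Gamma (ν + m + 1) * Gamma (ν + n + 1))

lemma gammaQuotient_succ_succ {ν : ℝ} (hν : -1 < ν) (m n : ℕ) :
    gammaQuotient ν (m + 1) (n + 1) =
      gammaQuotient ν m (n + 1) + (n + 1) * gammaQuotient (ν + 1) m n := by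
  have := (Gamma_add_natCast_add_one_pos hν m).ne'
  have := (Gamma_add_natCast_add_one_pos hν (n + 1)).ne'
  have ha : ν + m + 1 ≠ 0 := by linarith [m.cast_nonneg (α := ℝ)]
  have hb : ν + m + n + 2 ≠ 0 := by linarith [(m + n).cast_nonneg (α := ℝ)]
  simp only [gammaQuotient]
  push_cast at *
  rw [show ν + (m + 1) + (n + 1) + 1 = ν + m + n + 2 + 1 by ring, Gamma_add_one hb,
    show ν + (m + 1) + 1 = ν + m + 1 + 1 by ring, Gamma_add_one ha,
    show ν + 1 + m + 1 = ν + m + 1 + 1 by ring, Gamma_add_one ha,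
    show ν + 1 + m + n + 1 = ν + m + n + 2 by ring, show ν + m + (n + 1) + 1 = ν + m + n + 2 by ring,
    show ν + 1 + n + 1 = ν + (n + 1) + 1 by ring]
  field_simp
  ring

-- Induction on `m`: Pascal's rule and `(k + 1) C(n + 1, k + 1) = (n + 1) C(n, k)` turn the sum
-- into the same recursion as `gammaQuotient_succ_succ`.
theorem sum_choose_mul_choose_mul_factorial_div_Gamma {ν : ℝ} (hν : -1 < ν) (m n : ℕ) :
    ∑ k ∈ range (n + 1), (m.choose k * n.choose k * k ! : ℝ) / Gamma (ν + k + 1) =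
      gammaQuotient ν m n := by
  induction m generalizing ν n with
  | zero =>
    have := (Gamma_add_natCast_add_one_pos hν n).ne'
    rw [sum_range_succ']
    simp [gammaQuotient, field]
  | succ m ih =>
    cases n with
    | zero =>
      have := (Gamma_add_natCast_add_one_pos hν (m + 1)).ne'
      push_cast at this
      simp [gammaQuotient, field]
    | succ n =>
      have hstep : ∀ k ∈ range (n + 1),
          ((m + 1).choose (k + 1) * (n + 1).choose (k + 1) * (k + 1)! : ℝ) /
              Gamma (ν + (k + 1 : ℕ) + 1) =
            (n + 1) * ((m.choose k * n.choose k * k ! : ℝ) / Gamma (ν + 1 + k + 1)) +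
              (m.choose (k + 1) * (n + 1).choose (k + 1) * (k + 1)! : ℝ) /
                Gamma (ν + (k + 1 : ℕ) + 1) := by
        intro k _
        have hn : ((n + 1).choose (k + 1) * (k + 1) : ℝ) = (n + 1) * n.choose k := by
          exact_mod_cast (Nat.add_one_mul_choose_eq n k).symm
        rw [Nat.choose_succ_succ', Nat.factorial_succ,
          show ν + 1 + k + 1 = ν + (k + 1 : ℕ) + 1 by push_cast; ring]
        generalize Gamma (ν + (k + 1 : ℕ) + 1) = G
        push_cast
        linear_combination (m.choose k * k ! : ℝ) / G * hn
      have hm := ih hν (n + 1)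
      rw [sum_range_succ'] at hm
      rw [sum_range_succ', sum_congr rfl hstep, sum_add_distrib, ← mul_sum,
        ih (by linarith) n, gammaQuotient_succ_succ hν, ← hm]
      simp only [Nat.choose_zero_right]
      ring

noncomputable def besselSeries (ν t : ℝ) : ℝ :=
  ∑' m : ℕ, t ^ m / (m ! * Gamma (ν + m + 1))

lemma hasSum_besselSeries {ν : ℝ} (hν : -1 < ν) (t : ℝ) :
    HasSum (fun m : ℕ ↦ t ^ m / (m ! * Gamma (ν + m + 1))) (besselSeries ν t) :=
  (summable_norm_pow_div_factorial_mul_Gamma hν t).of_norm.hasSum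

lemma sphBesselI_eq_besselSeries (ν z : ℝ) :
    sphBesselI ν z = Gamma (ν + 1) * besselSeries ν ((z / 2) ^ 2) := by
  simp only [sphBesselI, besselSeries, pow_mul]

lemma sphBessel_eq_besselSeries (ν z : ℝ) :
    sphBessel ν z = Gamma (ν + 1) * besselSeries ν (-(z / 2) ^ 2) := by
  simp only [sphBessel, besselSeries, neg_pow (_ ^ 2), pow_mul]

lemma hasSum_exp_mul_exp_mul_besselSeries {ν : ℝ} (hν : -1 < ν) (x y : ℝ) :
    HasSum (fun q : (ℕ × ℕ) × ℕ ↦ x ^ q.1.1 / q.1.1 ! * (y ^ q.1.2 / q.1.2 !) *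
        ((x * y) ^ q.2 / (q.2 ! * Gamma (ν + q.2 + 1))))
      (exp x * exp y * besselSeries ν (x * y)) := by
  have hexp : ∀ z : ℝ, HasSum (fun n : ℕ ↦ z ^ n / n !) (exp z) := fun z ↦ by
    simpa [← Real.exp_eq_exp_ℝ] using NormedSpace.expSeries_div_hasSum_exp z
  have hnorm : ∀ z : ℝ, Summable fun n : ℕ ↦ ‖z ^ n / (n ! : ℝ)‖ :=
    NormedSpace.norm_expSeries_div_summable
  have hxy := (hexp x).mul (hexp y) (summable_mul_of_summable_norm (hnorm x) (hnorm y))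
  have hxy_norm := (hnorm x).mul_norm (hnorm y)
  have hsummable := summable_mul_of_summable_norm hxy_norm
    (summable_norm_pow_div_factorial_mul_Gamma hν (x * y))
  -- elaborated before meeting the goal: unifying `HasSum.mul` with it directly times out
  have htriple := hxy.mul (hasSum_besselSeries hν (x * y)) hsummable
  exact htriple

def shiftDiag (q : (ℕ × ℕ) × ℕ) : (ℕ × ℕ) × ℕ := ((q.1.1 + q.2, q.1.2 + q.2), q.2)

lemma shiftDiag_injective : Function.Injective shiftDiag := by
  rintro ⟨⟨a, b⟩, k⟩ ⟨⟨a', b'⟩, k'⟩ h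
  simp only [shiftDiag, Prod.mk.injEq] at h
  obtain ⟨⟨ha, hb⟩, rfl⟩ := h
  simp_all

theorem hasSum_pow_mul_pow_mul_gammaQuotient {ν : ℝ} (hν : -1 < ν) (x y : ℝ) :
    HasSum (fun p : ℕ × ℕ ↦ x ^ p.1 * y ^ p.2 / (p.1 ! * p.2 !) *
        gammaQuotient ν p.1 p.2)
      (exp (x + y) * besselSeries ν (x * y)) := by
  obtain ⟨f, hf⟩ : ∃ f : (ℕ × ℕ) × ℕ → ℝ, f = fun q ↦ x ^ q.1.1 * y ^ q.1.2 / (q.1.1 ! * q.1.2 !) *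
    ((q.1.1.choose q.2 * q.1.2.choose q.2 * q.2 ! : ℝ) / Gamma (ν + q.2 + 1)) := ⟨_, rfl⟩
  have hsupp : ∀ q ∉ Set.range shiftDiag, f q = 0 := by
    rintro ⟨⟨m, n⟩, k⟩ hq
    by_cases hk : k ≤ m ∧ k ≤ n
    · exact absurd ⟨((m - k, n - k), k), by simp [shiftDiag, hk.1, hk.2]⟩ hq
    · rcases not_and_or.mp hk with hk | hk <;> simp [hf, Nat.choose_eq_zero_of_lt (not_le.mp hk)]
  have hf_sum : HasSum f (exp x * exp y * besselSeries ν (x * y)) := by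
    refine (shiftDiag_injective.hasSum_iff hsupp).mp
      ((hasSum_exp_mul_exp_mul_besselSeries hν x y).congr_fun ?_)
    rintro ⟨⟨a, b⟩, k⟩
    have := (Gamma_add_natCast_add_one_pos hν k).ne'
    simp only [hf, Function.comp_apply, shiftDiag]
    rw [Nat.cast_choose ℝ (Nat.le_add_left k a), Nat.cast_choose ℝ (Nat.le_add_left k b),
      Nat.add_sub_cancel, Nat.add_sub_cancel]
    field_simp
    ring
  rw [exp_add]
  refine hf_sum.prod_fiberwise fun ⟨m, n⟩ ↦ ?_
  have hfiber : HasSum (fun k ↦ f ((m, n), k)) (∑ k ∈ range (n + 1), f ((m, n), k)) :=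
    hasSum_sum_of_ne_finset_zero fun k hk ↦ by
      simp [hf, Nat.choose_eq_zero_of_lt (show n < k by simpa using hk)]
  simpa only [hf, ← mul_sum, sum_choose_mul_choose_mul_factorial_div_Gamma hν] using hfiber

lemma sq_pow_mul_rpow {v : ℝ} (hv : 0 < v) (s : ℝ) (n : ℕ) :
    (v ^ 2) ^ n * v ^ s = v ^ (s + 2 * n) := by
  rw [rpow_add hv, ← pow_mul, mul_comm, ← rpow_natCast, mul_comm 2 n]
  push_cast
  ring_nf

lemma integrableOn_sq_pow_mul_rpow_mul_exp {ν α : ℝ} (hν : -1 < ν) (hα : 0 < α) (n : ℕ) :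
    IntegrableOn (fun v ↦ (v ^ 2) ^ n * (v ^ (2 * ν + 1) * exp (-α * v ^ 2))) (Ioi 0) := by
  refine (integrableOn_rpow_mul_exp_neg_mul_sq hα (s := 2 * ν + 1 + 2 * n)
    (by linarith [n.cast_nonneg (α := ℝ)])).congr_fun (fun v hv ↦ ?_) measurableSet_Ioi
  rw [← mul_assoc, sq_pow_mul_rpow hv]

lemma integral_sq_pow_mul_rpow_mul_exp {ν α : ℝ} (hν : -1 < ν) (hα : 0 < α) (n : ℕ) :
    ∫ v in Ioi 0, (v ^ 2) ^ n * (v ^ (2 * ν + 1) * exp (-α * v ^ 2)) =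
      α ^ (-(ν + 1)) / 2 * (Gamma (ν + n + 1) / α ^ n) := by
  calc ∫ v in Ioi 0, (v ^ 2) ^ n * (v ^ (2 * ν + 1) * exp (-α * v ^ 2))
      = ∫ v in Ioi 0, v ^ (2 * ν + 1 + 2 * n) * exp (-α * v ^ (2 : ℝ)) :=
        setIntegral_congr_fun measurableSet_Ioi fun v hv ↦ by
          rw [← mul_assoc, sq_pow_mul_rpow hv, rpow_two]
    _ = α ^ (-(ν + 1)) / 2 * (Gamma (ν + n + 1) / α ^ n) := by
      rw [integral_rpow_mul_exp_neg_mul_rpow two_pos (by linarith [n.cast_nonneg (α := ℝ)]) hα,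
        show -(2 * ν + 1 + 2 * n + 1) / 2 = -(ν + 1) - n by ring,
        show (2 * ν + 1 + 2 * n + 1) / 2 = ν + n + 1 by ring, rpow_sub hα, rpow_natCast]
      ring

noncomputable def besselProductTerm (ν α a b : ℝ) (p : ℕ × ℕ) (v : ℝ) : ℝ :=
  a ^ p.1 * b ^ p.2 / (p.1 ! * Gamma (ν + p.1 + 1) * (p.2 ! * Gamma (ν + p.2 + 1))) *
    ((v ^ 2) ^ (p.1 + p.2) * (v ^ (2 * ν + 1) * exp (-α * v ^ 2)))

lemma besselSeries_mul_besselSeries_mul_eq_tsum {ν : ℝ} (hν : -1 < ν) (α a b v : ℝ) :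
    besselSeries ν (a * v ^ 2) * besselSeries ν (b * v ^ 2) * (v ^ (2 * ν + 1) * exp (-α * v ^ 2)) =
      ∑' p, besselProductTerm ν α a b p v := by
  rw [besselSeries, besselSeries, tsum_mul_tsum_of_summable_norm
    (summable_norm_pow_div_factorial_mul_Gamma hν _)
    (summable_norm_pow_div_factorial_mul_Gamma hν _), ← tsum_mul_right]
  refine tsum_congr fun p ↦ ?_
  rw [besselProductTerm]
  ring

lemma integrableOn_besselProductTerm {ν α : ℝ} (hν : -1 < ν) (hα : 0 < α) (a b : ℝ)
    (p : ℕ × ℕ) : IntegrableOn (besselProductTerm ν α a b p) (Ioi 0) :=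
  (integrableOn_sq_pow_mul_rpow_mul_exp hν hα _).const_mul _

lemma integral_besselProductTerm {ν α : ℝ} (hν : -1 < ν) (hα : 0 < α) (a b : ℝ) (p : ℕ × ℕ) :
    ∫ v in Ioi 0, besselProductTerm ν α a b p v =
      α ^ (-(ν + 1)) / 2 * ((a / α) ^ p.1 * (b / α) ^ p.2 / (p.1 ! * p.2 !) *
        gammaQuotient ν p.1 p.2) := by
  have := (Gamma_add_natCast_add_one_pos hν p.1).ne'
  have := (Gamma_add_natCast_add_one_pos hν p.2).ne'
  simp only [besselProductTerm, gammaQuotient]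
  rw [integral_const_mul, integral_sq_pow_mul_rpow_mul_exp hν hα, div_pow, div_pow]
  have := hα.ne'
  push_cast
  field_simp
  rw [← add_assoc ν, pow_add]
  ring

lemma norm_besselProductTerm {ν α : ℝ} (hν : -1 < ν) (a b : ℝ) (p : ℕ × ℕ) {v : ℝ} (hv : 0 < v) :
    ‖besselProductTerm ν α a b p v‖ = besselProductTerm ν α |a| |b| p v := by
  have hden : 0 < (p.1 ! * Gamma (ν + p.1 + 1) * (p.2 ! * Gamma (ν + p.2 + 1)) : ℝ) := by
    have := Gamma_add_natCast_add_one_pos hν p.1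
    have := Gamma_add_natCast_add_one_pos hν p.2
    positivity
  have hweight : 0 ≤ (v ^ 2) ^ (p.1 + p.2) * (v ^ (2 * ν + 1) * exp (-α * v ^ 2)) := by
    positivity
  rw [besselProductTerm, besselProductTerm, norm_mul, norm_div, norm_mul, norm_pow, norm_pow,
    Real.norm_of_nonneg hden.le, Real.norm_of_nonneg hweight, Real.norm_eq_abs, Real.norm_eq_abs]

theorem integral_besselSeries_mul_besselSeries {ν α : ℝ} (hν : -1 < ν) (hα : 0 < α) (a b : ℝ) :
    ∫ v in Ioi 0, besselSeries ν (a * v ^ 2) * besselSeries ν (b * v ^ 2) *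
        (v ^ (2 * ν + 1) * exp (-α * v ^ 2)) =
      α ^ (-(ν + 1)) / 2 * (exp (a / α + b / α) * besselSeries ν (a / α * (b / α))) := by
  have hterms : ∀ a b : ℝ, HasSum (fun p ↦ ∫ v in Ioi 0, besselProductTerm ν α a b p v)
      (α ^ (-(ν + 1)) / 2 * (exp (a / α + b / α) * besselSeries ν (a / α * (b / α)))) :=
    fun a b ↦ by
      simpa only [integral_besselProductTerm hν hα] using
        (hasSum_pow_mul_pow_mul_gammaQuotient hν (a / α) (b / α)).mul_left (α ^ (-(ν + 1)) / 2)
  have habs : Summable fun p ↦ ∫ v in Ioi 0, ‖besselProductTerm ν α a b p v‖ :=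
    (hterms |a| |b|).summable.congr fun p ↦ setIntegral_congr_fun measurableSet_Ioi
      fun v hv ↦ (norm_besselProductTerm hν a b p hv).symm
  simp_rw [besselSeries_mul_besselSeries_mul_eq_tsum hν,
    ← integral_tsum_of_summable_integral_norm (integrableOn_besselProductTerm hν hα a b) habs]
  exact (hterms a b).tsum_eq

theorem weber_sonine_general
    (ν α β γ : ℝ) (hν : -1 < ν) (hα : 0 < α) :
    ∫ v in Set.Ioi (0 : ℝ),
        Real.exp (-α * v ^ 2) * sphBesselI ν (β * v) * sphBessel ν (γ * v) *
          v ^ (2 * ν + 1) / ((2 : ℝ) ^ ν * Real.Gamma (ν + 1)) =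
      (2 * α) ^ (-(ν + 1)) * Real.exp ((β ^ 2 - γ ^ 2) / (4 * α)) *
        sphBessel ν (β * γ / (2 * α)) := by
  have hΓ : Gamma (ν + 1) ≠ 0 := (Gamma_pos_of_pos (by linarith)).ne'
  have hintegrand : ∀ v : ℝ, exp (-α * v ^ 2) * sphBesselI ν (β * v) * sphBessel ν (γ * v) *
      v ^ (2 * ν + 1) / (2 ^ ν * Gamma (ν + 1)) = Gamma (ν + 1) / 2 ^ ν *
        (besselSeries ν ((β / 2) ^ 2 * v ^ 2) * besselSeries ν (-(γ / 2) ^ 2 * v ^ 2) *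
          (v ^ (2 * ν + 1) * exp (-α * v ^ 2))) := fun v ↦ by
    rw [sphBesselI_eq_besselSeries, sphBessel_eq_besselSeries]
    field_simp
  simp_rw [hintegrand]
  rw [integral_const_mul, integral_besselSeries_mul_besselSeries hν hα, sphBessel_eq_besselSeries,
    mul_rpow zero_le_two hα.le, rpow_neg zero_le_two, rpow_add_one two_ne_zero]
  have hexp : (β / 2) ^ 2 / α + -(γ / 2) ^ 2 / α = (β ^ 2 - γ ^ 2) / (4 * α) := by ring
  have harg : (β / 2) ^ 2 / α * (-(γ / 2) ^ 2 / α) = -(β * γ / (2 * α) / 2) ^ 2 := by ring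
  rw [hexp, harg]
  ring

/-- Weber–Sonine type integral: the analytic core of the identification of the Bessel
semigroup, valid exactly for `ν > -1`, i.e. dimension `δ = 2ν + 2 > 0`. -/
theorem weber_sonine
    (ν α β γ : ℝ) (hν : -1 < ν) (hα : 0 < α) (hβ : 0 ≤ β) (hγ : 0 ≤ γ) :
    ∫ v in Set.Ioi (0 : ℝ),
        Real.exp (-α * v ^ 2) * sphBesselI ν (β * v) * sphBessel ν (γ * v) *
          v ^ (2 * ν + 1) / ((2 : ℝ) ^ ν * Real.Gamma (ν + 1)) =
      (2 * α) ^ (-(ν + 1)) * Real.exp ((β ^ 2 - γ ^ 2) / (4 * α)) *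
        sphBessel ν (β * γ / (2 * α)) :=
  weber_sonine_general ν α β γ hν hα
end

section
/- Let d > 0 be real, k, m ∈ ℕ with k ≤ m, and s < u < v < 0. Then Σ_{l=k}^{m} [Γ(d+l)/(Γ(d+k)(l−k)!)] (u/s)^{d+k} (1−u/s)^{l−k} · [Γ(d+m)/(Γ(d+l)(m−l)!)] (v/u)^{d+l} (1−v/u)^{m−l} = [Γ(d+m)/(Γ(d+k)(m−k)!)] (v/s)^{d+k} (1−v/s)^{m−k}. (Chapman–Kolmogorov equation for the quantum Bessel semigroup of dimension d in the negative-time regime.) -/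
open Real

set_option maxHeartbeats 1000000

/-- Chapman–Kolmogorov equation for the quantum Bessel semigroup of dimension `d` in the
negative-time regime: composition of negative-binomial kernels. -/
theorem quantum_bessel_chapman_kolmogorov_neg
    (d : ℝ) (hd : 0 < d) (k m : ℕ) (hkm : k ≤ m) (s u v : ℝ)
    (hsu : s < u) (huv : u < v) (hv : v < 0) :
    ∑ l ∈ Finset.Icc k m,
        Real.Gamma (d + l) / (Real.Gamma (d + k) * Nat.factorial (l - k)) *
            (u / s) ^ (d + (k : ℝ)) * (1 - u / s) ^ (l - k) *
          (Real.Gamma (d + m) / (Real.Gamma (d + l) * Nat.factorial (m - l)) *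
            (v / u) ^ (d + (l : ℝ)) * (1 - v / u) ^ (m - l)) =
      Real.Gamma (d + m) / (Real.Gamma (d + k) * Nat.factorial (m - k)) *
        (v / s) ^ (d + (k : ℝ)) * (1 - v / s) ^ (m - k) := by
  have hu : u < 0 := huv.trans hv
  have hs : s < 0 := hsu.trans hu
  have hus : 0 < u / s := div_pos_of_neg_of_neg hu hs
  have hvu : 0 < v / u := div_pos_of_neg_of_neg hv hu
  have hvs : 0 < v / s := div_pos_of_neg_of_neg hv hs
  set n := m - k with hn
  have hrange : m + 1 - k = n + 1 := by omega
  rw [← Finset.Ico_add_one_right_eq_Icc, Finset.sum_Ico_eq_sum_range, hrange]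
  have hmul : (u / s) * (v / u) = v / s := by
    rw [div_mul_div_comm, mul_comm s u, mul_div_mul_left _ _ hu.ne]
  have hxy : (v / u) * (1 - u / s) + (1 - v / u) = 1 - v / s := by
    have h : (v / u) * (u / s) = v / s := by
      rw [div_mul_div_comm, mul_comm v u, mul_div_mul_left _ _ hu.ne]
    linear_combination -h
  have hterm : ∀ j ∈ Finset.range (n + 1),
      Real.Gamma (d + ↑(k + j)) / (Real.Gamma (d + k) * Nat.factorial ((k + j) - k)) *
            (u / s) ^ (d + (k : ℝ)) * (1 - u / s) ^ ((k + j) - k) *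
          (Real.Gamma (d + m) / (Real.Gamma (d + ↑(k + j)) * Nat.factorial (m - (k + j))) *
            (v / u) ^ (d + ((k + j : ℕ) : ℝ)) * (1 - v / u) ^ (m - (k + j))) =
      Real.Gamma (d + m) / (Real.Gamma (d + k) * Nat.factorial n) *
        (v / s) ^ (d + (k : ℝ)) *
        (((v / u) * (1 - u / s)) ^ j * (1 - v / u) ^ (n - j) * (n.choose j : ℝ)) := by
    intro j hj
    have hjn : j ≤ n := by
      simp only [Finset.mem_range] at hj; omega
    have h1 : (k + j) - k = j := by omega
    have h2 : m - (k + j) = n - j := by omega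
    have hGl : Real.Gamma (d + ↑(k + j)) ≠ 0 := by
      have : (0:ℝ) < d + ↑(k + j) := by positivity
      exact (Real.Gamma_pos_of_pos this).ne'
    have hGk : Real.Gamma (d + k) ≠ 0 := by
      have : (0:ℝ) < d + k := by positivity
      exact (Real.Gamma_pos_of_pos this).ne'
    have hrpow : (v / u) ^ (d + ((k + j : ℕ) : ℝ)) =
        (v / u) ^ (d + (k : ℝ)) * (v / u) ^ j := by
      have : d + ((k + j : ℕ) : ℝ) = (d + (k : ℝ)) + (j : ℝ) := by push_cast; ring
      rw [this, Real.rpow_add hvu, Real.rpow_natCast]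
    have hrpow2 : (u / s) ^ (d + (k : ℝ)) * (v / u) ^ (d + (k : ℝ)) =
        (v / s) ^ (d + (k : ℝ)) := by
      rw [← Real.mul_rpow hus.le hvu.le, hmul]
    have hchoose : (n.choose j : ℝ) * (j.factorial : ℝ) * ((n - j).factorial : ℝ)
        = (n.factorial : ℝ) := by
      exact_mod_cast congrArg (Nat.cast (R := ℝ))
        (Nat.choose_mul_factorial_mul_factorial hjn)
    rw [h1, h2, hrpow]
    have hfj : (j.factorial : ℝ) ≠ 0 := by positivity
    have hfnj : ((n - j).factorial : ℝ) ≠ 0 := by positivity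
    have hfn : (n.factorial : ℝ) ≠ 0 := by positivity
    have hGl2 : Real.Gamma (d + ↑k + ↑j) ≠ 0 := by
      have h0 : (0:ℝ) < d + ↑k + ↑j := by positivity
      exact (Real.Gamma_pos_of_pos h0).ne'
    have hch : ((n.choose j : ℕ) : ℝ) ≠ 0 := by
      exact_mod_cast (Nat.choose_pos hjn).ne'
    rw [← hrpow2, ← hchoose, mul_pow]
    set G := Real.Gamma (d + ((k + j : ℕ) : ℝ)) with hG
    set GK := Real.Gamma (d + (k : ℝ)) with hGK
    set GM := Real.Gamma (d + (m : ℝ)) with hGM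
    set A := (u / s) ^ (d + (k : ℝ)) with hA
    set Pk := (v / u) ^ (d + (k : ℝ)) with hPk
    field_simp
  rw [Finset.sum_congr rfl hterm, ← Finset.mul_sum]
  rw [← add_pow ((v / u) * (1 - u / s)) (1 - v / u) n, hxy]
end

section
/- Let d > 0 be real, k ∈ ℕ, s < u < 0 and y > 0. Then Σ_{l=k}^{∞} [Γ(d+l)/(Γ(d+k)(l−k)!)] (u/s)^{d+k} (1−u/s)^{l−k} · [1/Γ(d+l)] e^{y/u} (−y/u)^{d+l−1} (−1/u) = [1/Γ(d+k)] e^{y/s} (−y/s)^{d+k−1} (−1/s). (Chapman–Kolmogorov equation for the quantum Bessel semigroup of dimension d, composing a negative-binomial step with the Gamma step reaching the vertical axis.) -/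
open Real

/-- Chapman–Kolmogorov equation for the quantum Bessel semigroup of dimension `d`,
composing a negative-binomial step from `(s, k|s|)` to `(u, l|u|)` with the Gamma step
from `(u, l|u|)` reaching the vertical axis. -/
theorem quantum_bessel_chapman_kolmogorov_gamma
    (d : ℝ) (hd : 0 < d) (k : ℕ) (s u y : ℝ)
    (hsu : s < u) (hu : u < 0) (hy : 0 < y) :
    ∑' j : ℕ,
        Real.Gamma (d + (k + j)) / (Real.Gamma (d + k) * Nat.factorial j) *
            (u / s) ^ (d + (k : ℝ)) * (1 - u / s) ^ j *
          (1 / Real.Gamma (d + (k + j)) * Real.exp (y / u) *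
            (-y / u) ^ (d + ((k + j : ℕ) : ℝ) - 1) * (-1 / u)) =
      1 / Real.Gamma (d + k) * Real.exp (y / s) * (-y / s) ^ (d + (k : ℝ) - 1) *
        (-1 / s) := by
  have hs : s < 0 := hsu.trans hu
  have hu0 : u ≠ 0 := hu.ne
  have hs0 : s ≠ 0 := hs.ne
  have hus : 0 < u / s := div_pos_of_neg_of_neg hu hs
  have ha : 0 < 1 - u / s := by
    have h := div_neg_of_pos_of_neg (sub_pos.mpr hsu) hs
    rw [sub_div, div_self hs0] at h
    linarith
  have hb : 0 < -y / u := div_pos_of_neg_of_neg (by linarith) hu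
  have hGk : Real.Gamma (d + k) ≠ 0 :=
    (Real.Gamma_pos_of_pos (by positivity)).ne'
  set a : ℝ := 1 - u / s with ha'
  set b : ℝ := -y / u with hb'
  set C : ℝ := (u / s) ^ (d + (k : ℝ)) * Real.exp (y / u) * b ^ (d + (k : ℝ) - 1) *
      (-1 / u) / Real.Gamma (d + k) with hC
  have hexp : ∀ x : ℝ, Real.exp x = ∑' n : ℕ, x ^ n / n.factorial := by
    intro x
    rw [Real.exp_eq_exp_ℝ, NormedSpace.exp_eq_tsum_div]
  have key : ∀ j : ℕ,
      Real.Gamma (d + (k + j)) / (Real.Gamma (d + k) * Nat.factorial j) *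
          (u / s) ^ (d + (k : ℝ)) * (1 - u / s) ^ j *
        (1 / Real.Gamma (d + (k + j)) * Real.exp (y / u) *
          (-y / u) ^ (d + ((k + j : ℕ) : ℝ) - 1) * (-1 / u)) =
      C * ((a * b) ^ j / j.factorial) := by
    intro j
    have hGkj : Real.Gamma (d + (k + j)) ≠ 0 :=
      (Real.Gamma_pos_of_pos (by positivity)).ne'
    have hGkj2 : Real.Gamma (d + (k : ℝ) + j) ≠ 0 := by
      rw [add_assoc]; exact hGkj
    have hfac : (j.factorial : ℝ) ≠ 0 := Nat.cast_ne_zero.mpr j.factorial_ne_zero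
    have hpow : (-y / u) ^ (d + ((k + j : ℕ) : ℝ) - 1) =
        b ^ (d + (k : ℝ) - 1) * b ^ j := by
      rw [← hb']
      have h : d + ((k + j : ℕ) : ℝ) - 1 = (d + (k : ℝ) - 1) + (j : ℝ) := by
        push_cast; ring
      rw [h, Real.rpow_add hb, Real.rpow_natCast]
    rw [hpow, hC, mul_pow]
    linear_combination ((u / s) ^ (d + (k : ℝ)) * a ^ j * Real.exp (y / u) *
      b ^ (d + (k : ℝ) - 1) * b ^ j * (-1 / u) /
      (Real.Gamma (d + (k : ℝ)) * j.factorial)) * mul_inv_cancel₀ hGkj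
  rw [tsum_congr key, tsum_mul_left, ← hexp]
  have hab : a * b = y / s - y / u := by
    rw [ha', hb']
    field_simp
    ring
  have hexpcomb : Real.exp (y / u) * Real.exp (a * b) = Real.exp (y / s) := by
    rw [← Real.exp_add, hab]; ring_nf
  have h1 : (u / s) ^ (d + (k : ℝ)) =
      (u / s) ^ (d + (k : ℝ) - 1) * (u / s) := by
    nth_rewrite 1 [show d + (k : ℝ) = (d + (k : ℝ) - 1) + 1 by ring]
    rw [Real.rpow_add hus, Real.rpow_one]
  have h2 : (u / s) ^ (d + (k : ℝ) - 1) * b ^ (d + (k : ℝ) - 1) =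
      (-y / s) ^ (d + (k : ℝ) - 1) := by
    rw [← Real.mul_rpow hus.le hb.le]
    congr 1
    rw [hb']
    field_simp
  have h3 : (u / s) * (-1 / u) = -1 / s := by
    field_simp
  have hpows : (u / s) ^ (d + (k : ℝ)) * b ^ (d + (k : ℝ) - 1) * (-1 / u) =
      (-y / s) ^ (d + (k : ℝ) - 1) * (-1 / s) := by
    calc (u / s) ^ (d + (k : ℝ)) * b ^ (d + (k : ℝ) - 1) * (-1 / u)
        = ((u / s) ^ (d + (k : ℝ) - 1) * b ^ (d + (k : ℝ) - 1)) *
            ((u / s) * (-1 / u)) := by rw [h1]; ring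
      _ = (-y / s) ^ (d + (k : ℝ) - 1) * (-1 / s) := by rw [h2, h3]
  calc C * Real.exp (a * b)
      = Real.exp (y / u) * Real.exp (a * b) *
          ((u / s) ^ (d + (k : ℝ)) * b ^ (d + (k : ℝ) - 1) * (-1 / u)) /
          Real.Gamma (d + k) := by rw [hC]; ring
    _ = Real.exp (y / s) * ((-y / s) ^ (d + (k : ℝ) - 1) * (-1 / s)) /
          Real.Gamma (d + k) := by rw [hexpcomb, hpows]
    _ = 1 / Real.Gamma (d + k) * Real.exp (y / s) * (-y / s) ^ (d + (k : ℝ) - 1) *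
          (-1 / s) := by ring
end

section
/- Let d ∈ ℕ and t > 0. For every n ∈ ℕ, every z₁, …, z_n ∈ ℂ^d, w₁, …, w_n ∈ ℝ and c₁, …, c_n ∈ ℂ, the sum Σ_{i=1}^{n} Σ_{j=1}^{n} c_i · conj(c_j) · exp(t(−i(w_i − w_j − Im⟨z_i, z_j⟩) − |z_i − z_j|²/2)) is a nonnegative real number. (Equivalently: the function exp(tψ), with ψ(z,w) = −iw − |z|²/2, is positive definite on the Heisenberg group H = ℂ^d × ℝ with multiplication (z,w)(z′,w′) = (z+z′, w+w′+Im⟨z′,z⟩), for which (z,w)^{−1} = (−z,−w) and (z_j,w_j)^{−1}(z_i,w_i) = (z_i−z_j, w_i−w_j−Im⟨z_i,z_j⟩).) -/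
/-!
The exponent factors through the Gram matrix: `ψ(g_j⁻¹ g_i) = ψ(g_i) + ⟨z_i, z_j⟩ + conj ψ(g_j)`,
so the kernel is `D E Dᴴ` with `D` diagonal and `E = (exp (t ⟨z_i, z_j⟩))_{ij}`. The Gram matrix is
positive semidefinite, hence so are its entrywise powers (Schur product theorem), their
nonnegative combinations, and in the limit its entrywise exponential `E`.
-/

open Complex Matrix
open scoped Nat ComplexOrder ComplexConjugate InnerProductSpace

namespace Matrix

variable {ι 𝕜 : Type*} [RCLike 𝕜]

theorem isClosed_setOf_posSemidef : IsClosed {A : Matrix ι ι 𝕜 | A.PosSemidef} := by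
  simp only [PosSemidef, Set.ofPred_and, Set.ofPred_forall]
  refine .inter (isClosed_eq continuous_id.matrix_conjTranspose continuous_id)
    (isClosed_iInter fun x => isClosed_le continuous_const ?_)
  unfold Finsupp.sum
  fun_prop

theorem PosSemidef.map_pow [Finite ι] {A : Matrix ι ι 𝕜} (hA : A.PosSemidef) :
    ∀ k : ℕ, (A.map (· ^ k)).PosSemidef
  | 0 => by
    convert posSemidef_gram 𝕜 (fun _ : ι => (1 : 𝕜)) using 1
    ext i j
    simp
  | k + 1 => by
    convert (hA.map_pow k).hadamard hA using 1
    ext i j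
    simp [pow_succ]

theorem PosSemidef.map_exp [Finite ι] {A : Matrix ι ι ℂ} (hA : A.PosSemidef) :
    (A.map exp).PosSemidef := by
  have hsum : HasSum (fun k : ℕ => ((k ! : ℝ)⁻¹ • A.map (· ^ k))) (A.map exp) := by
    refine Pi.hasSum.mpr fun i => Pi.hasSum.mpr fun j => ?_
    simpa [Complex.exp_eq_exp_ℂ, div_eq_inv_mul] using NormedSpace.expSeries_div_hasSum_exp (A i j)
  refine isClosed_setOf_posSemidef.mem_of_tendsto hsum.tendsto_sum_nat (.of_forall fun N => ?_)
  exact posSemidef_sum _ fun k _ => (hA.map_pow k).smul (by positivity)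

theorem PosSemidef.sum_mul_conj_nonneg [Fintype ι] {A : Matrix ι ι 𝕜} (hA : A.PosSemidef)
    (c : ι → 𝕜) : 0 ≤ ∑ i, ∑ j, c i * conj (c j) * A i j := by
  simpa [dotProduct, mulVec, Finset.mul_sum, mul_comm, mul_left_comm] using
    hA.dotProduct_mulVec_nonneg (star c)

end Matrix

section Heisenberg

variable {E : Type*} [NormedAddCommGroup E] [InnerProductSpace ℂ E]

noncomputable def heisenbergPsi (z : E) (w : ℝ) : ℂ := -I * w - (‖z‖ : ℂ) ^ 2 / 2

/-- The left-hand side is `ψ((z', w')⁻¹ (z, w))`. -/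
theorem heisenbergPsi_inv_mul (z z' : E) (w w' : ℝ) :
    -I * ((w : ℂ) - (w' : ℂ) - (((⟪z, z'⟫_ℂ).im : ℝ) : ℂ)) - ((‖z - z'‖ : ℝ) : ℂ) ^ 2 / 2 =
      heisenbergPsi z w + ⟪z, z'⟫_ℂ + conj (heisenbergPsi z' w') := by
  have hnorm : ((‖z - z'‖ : ℝ) : ℂ) ^ 2 =
      (‖z‖ : ℂ) ^ 2 - 2 * ((⟪z, z'⟫_ℂ).re : ℂ) + (‖z'‖ : ℂ) ^ 2 := by
    exact_mod_cast congrArg ofReal (norm_sub_sq (𝕜 := ℂ) z z')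
  rw [hnorm]
  conv_rhs => rw [← re_add_im ⟪z, z'⟫_ℂ]
  simp only [heisenbergPsi, map_sub, map_mul, map_neg, conj_I, conj_ofReal, map_div₀, map_pow,
    map_ofNat]
  ring

theorem exp_mul_heisenbergPsi_inv_mul (t : ℝ) (z z' : E) (w w' : ℝ) :
    exp (t * (-I * ((w : ℂ) - (w' : ℂ) - (((⟪z, z'⟫_ℂ).im : ℝ) : ℂ)) -
        ((‖z - z'‖ : ℝ) : ℂ) ^ 2 / 2)) =
      exp (t * heisenbergPsi z w) * exp (t * ⟪z, z'⟫_ℂ) *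
        conj (exp (t * heisenbergPsi z' w')) := by
  rw [heisenbergPsi_inv_mul, ← Complex.exp_conj, ← exp_add, ← exp_add, map_mul, conj_ofReal]
  ring_nf

end Heisenberg

/-- The function `exp(tψ)`, with `ψ(z,w) = -iw - |z|²/2`, is positive definite on the
Heisenberg group `H = ℂ^d × ℝ` with multiplication
`(z,w)(z',w') = (z+z', w+w'+Im⟨z',z⟩)`: every quadratic form
`Σ_{i,j} c_i conj(c_j) exp(tψ((z_j,w_j)^{-1}(z_i,w_i)))` is a nonnegative real number. -/
theorem heisenberg_exp_psi_posdef
    (d : ℕ) (t : ℝ) (ht : 0 < t) (n : ℕ)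
    (z : Fin n → EuclideanSpace ℂ (Fin d)) (w : Fin n → ℝ) (c : Fin n → ℂ) :
    ∃ r : ℝ, 0 ≤ r ∧
      ∑ i : Fin n, ∑ j : Fin n,
          c i * (starRingEnd ℂ) (c j) *
            Complex.exp ((t : ℂ) *
              (-Complex.I *
                  ((w i : ℂ) - (w j : ℂ) -
                    (((inner ℂ (z i) (z j) : ℂ).im : ℝ) : ℂ)) -
                ((‖z i - z j‖ : ℝ) : ℂ) ^ 2 / 2)) = (r : ℂ) := by
  set D : Matrix (Fin n) (Fin n) ℂ := diagonal fun i => exp (t * heisenbergPsi (z i) (w i))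
  have hK : (D * (t • gram ℂ z).map exp * Dᴴ).PosSemidef :=
    (((posSemidef_gram ℂ z).smul ht.le).map_exp).mul_mul_conjTranspose_same D
  obtain ⟨r, hr, hsum⟩ := RCLike.nonneg_iff_exists_ofReal.mp (hK.sum_mul_conj_nonneg c)
  refine ⟨r, hr, .trans ?_ hsum.symm⟩
  simp only [D, diagonal_conjTranspose, diagonal_mul, mul_diagonal, map_apply, Matrix.smul_apply,
    gram_apply, real_smul, Pi.star_apply, RCLike.star_def, exp_mul_heisenbergPsi_inv_mul]
end
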